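/- arXiv:math/0405452 — 3 statements merged into one kernel-verified Lean document; each statement's English description precedes it below -/
import Mathlib

section
/- Every k×k matrix with all entries finite (in ℝ) that is of type scs1-cyc1 (its critical graph has exactly one strongly connected component and cyclicity 1) has a max-plus power of rank 1: there exists n ∈ ℕ such that rk(A^{⊗n}) = 1. -/
open scoped BigOperators
open MeasureTheory

noncomputable section

/-- The max-plus semiring carrier `ℝ_max = ℝ ∪ {-∞}`, where `⊕ = max` (the lattice `sup`)
and `⊗ = +` (the additive structure of `WithBot ℝ`, for which `⊥` is absorbing). -/
abbrev Rmax : Type := WithBot ℝ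

/-- The order topology on `ℝ_max`; it coincides with the topology of the metric
`d(x,y) = |arctan x - arctan y|` (with `arctan (-∞) = -π/2`). -/
instance : TopologicalSpace Rmax := Preorder.topology Rmax

instance : MeasurableSpace Rmax := borel Rmax

/-- `k × k` matrices with entries in `ℝ_max`. -/
abbrev MPMat (k : ℕ) : Type := Fin k → Fin k → Rmax

namespace MaxPlus

variable {k : ℕ}

/-- Max-plus matrix product: `(A ⊗ B) i j = max_l (A i l + B l j)`. -/
def mpMul (A B : MPMat k) : MPMat k :=
  fun i j => Finset.univ.sup fun l => A i l + B l j

/-- The max-plus identity matrix. -/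
def mpId (k : ℕ) : MPMat k := fun i j => if i = j then (0 : Rmax) else ⊥

/-- Max-plus power `A^{⊗n}` (with the convention `A^{⊗0} = Id`). -/
def mpPow (A : MPMat k) : ℕ → MPMat k
  | 0 => mpId k
  | n + 1 => mpMul (mpPow A n) A

/-- Max-plus product of a list of matrices (in the order of the list). -/
def mpListProd : List (MPMat k) → MPMat k
  | [] => mpId k
  | A :: L => mpMul A (mpListProd L)

/-- The backward product `X N ⊗ ⋯ ⊗ X 1`. -/
def mpProd (X : ℕ → MPMat k) : ℕ → MPMat k
  | 0 => mpId k
  | n + 1 => mpMul (X (n + 1)) (mpProd X n)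

/-- `A` has max-plus rank one: `A i j = a i + b j` for vectors `a`, `b`,
neither identically `-∞`. -/
def IsRankOne (A : MPMat k) : Prop :=
  ∃ a b : Fin k → Rmax, (∃ i, a i ≠ ⊥) ∧ (∃ j, b j ≠ ⊥) ∧ ∀ i j, A i j = a i + b j

/-- `A ∈ M_k`: no row of `-∞`. -/
def MemMk (A : MPMat k) : Prop := ∀ i, ∃ j, A i j ≠ ⊥

/-- `A ∈ P_k` (primitive): some max-plus power of `A` has all entries finite. -/
def MemPk (A : MPMat k) : Prop :=
  MemMk A ∧ ∃ n : ℕ, 0 < n ∧ ∀ i j, mpPow A n i j ≠ ⊥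

/-- Weight of the path `(p 0, p 1, …, p n)` with respect to `A`. -/
def pathWeight (A : MPMat k) (n : ℕ) (p : ℕ → Fin k) : Rmax :=
  ∑ l ∈ Finset.range n, A (p l) (p (l + 1))

/-- Average weight of a circuit of length `n`. -/
def circAw (A : MPMat k) (n : ℕ) (p : ℕ → Fin k) : Rmax :=
  (pathWeight A n p).map fun x => x / (n : ℝ)

/-- Max-plus spectral radius: the maximum of the average weights of the circuits of
length at most `k` (equivalently, of the elementary circuits) of `G(A)`. -/
def mpRho (A : MPMat k) : Rmax :=
  Finset.univ.sup fun c : Σ n : Fin k, Fin (n.1 + 1) → Fin k =>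
    circAw A (c.1.1 + 1) fun l => c.2 ⟨l % (c.1.1 + 1), Nat.mod_lt _ (Nat.succ_pos _)⟩

/-- The arc `(i,j)` belongs to the critical graph `G^c(A)`: it lies on a circuit of
`G(A)` whose average weight is `ρ_max(A)`. -/
def IsCritArc (A : MPMat k) (i j : Fin k) : Prop :=
  ∃ (n : ℕ) (p : ℕ → Fin k), 0 < n ∧ p n = p 0 ∧
    pathWeight A n p ≠ ⊥ ∧ circAw A n p = mpRho A ∧
    ∃ l < n, p l = i ∧ p (l + 1) = j

/-- The node `i` belongs to the critical graph `G^c(A)`. -/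
def IsCritNode (A : MPMat k) (i : Fin k) : Prop := ∃ j, IsCritArc A i j

/-- `j` can be reached from `i` by a path in the critical graph. -/
def CritConnected (A : MPMat k) (i j : Fin k) : Prop :=
  ∃ (n : ℕ) (p : ℕ → Fin k), p 0 = i ∧ p n = j ∧
    ∀ l < n, IsCritArc A (p l) (p (l + 1))

/-- The critical graph `G^c(A)` is nonempty and has exactly one strongly connected
component. -/
def CritSCS1 (A : MPMat k) : Prop :=
  (∃ i, IsCritNode A i) ∧ ∀ i j, IsCritNode A i → IsCritNode A j → CritConnected A i j

/-- The critical graph contains a circuit of length `n`. -/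
def HasCritCircuitLen (A : MPMat k) (n : ℕ) : Prop :=
  0 < n ∧ ∃ p : ℕ → Fin k, p n = p 0 ∧ ∀ l < n, IsCritArc A (p l) (p (l + 1))

/-- The cyclicity of the critical graph is `1`: the gcd of the lengths of its circuits
is `1` (equivalently, finitely many of these lengths have gcd `1`). -/
def CritCyc1 (A : MPMat k) : Prop :=
  ∃ S : Finset ℕ, S.Nonempty ∧ (∀ m ∈ S, HasCritCircuitLen A m) ∧ S.gcd id = 1

/-- `A` is of type scs1-cyc1. -/
def IsScs1Cyc1 (A : MPMat k) : Prop := CritSCS1 A ∧ CritCyc1 A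

/-- The cyclicity `c(A)` of the critical graph: the gcd of the lengths of its circuits. -/
def critCyclicity (A : MPMat k) : ℕ :=
  sInf {d : ℕ | 0 < d ∧ (∀ n, HasCritCircuitLen A n → d ∣ n) ∧
    ∀ e : ℕ, (∀ n, HasCritCircuitLen A n → e ∣ n) → e ∣ d}

/-- A real matrix, seen as a matrix with entries in `ℝ_max`. -/
def toMP (A : Fin k → Fin k → ℝ) : MPMat k := fun i j => (A i j : Rmax)

open Classical in
/-- Value at `V` of the linear form on `ℝ_max^{k×k}` with (real) coefficients `α`:
the usual linear combination of the entries with nonzero coefficients if these are all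
finite, and `-∞` otherwise. -/
def evalForm (α : Fin k → Fin k → ℝ) (V : MPMat k) : Rmax :=
  if ∀ i j, α i j ≠ 0 → V i j ≠ ⊥ then
    (((∑ i, ∑ j, if α i j = 0 then (0 : ℝ) else α i j * WithBot.unbotD 0 (V i j)) : ℝ) : Rmax)
  else ⊥

open Classical in
/-- Value at `(V, W)` of the linear form on `ℝ_max^{k×k} × ℝ_max^{k×k}` with
coefficients `(α, β)`. -/
def evalForm2 (α β : Fin k → Fin k → ℝ) (V W : MPMat k) : Rmax :=
  if (∀ i j, α i j ≠ 0 → V i j ≠ ⊥) ∧ (∀ i j, β i j ≠ 0 → W i j ≠ ⊥) then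
    ((((∑ i, ∑ j, if α i j = 0 then (0 : ℝ) else α i j * WithBot.unbotD 0 (V i j)) +
        (∑ i, ∑ j, if β i j = 0 then (0 : ℝ) else β i j * WithBot.unbotD 0 (W i j))) : ℝ) : Rmax)
  else ⊥

open Classical in
/-- Coefficient matrix of the linear form `w(·, pth)` (weight of the path
`(p 0, …, p n)`): the coefficient of the entry `(i,j)` is the number of times the path
uses the arc `(i,j)`. -/
def pathCoeff (n : ℕ) (p : ℕ → Fin k) : Fin k → Fin k → ℝ := fun i j =>
  (((Finset.range n).filter fun l => p l = i ∧ p (l + 1) = j).card : ℝ)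

/-- Coefficient matrix of the linear form `aw(·, c)` (average weight of the circuit
`(p 0, …, p n = p 0)`). -/
def circCoeff (n : ℕ) (p : ℕ → Fin k) : Fin k → Fin k → ℝ := fun i j =>
  pathCoeff n p i j / (n : ℝ)

/-- `(p 0, …, p n)` is an elementary path. -/
def IsElemPath (n : ℕ) (p : ℕ → Fin k) : Prop :=
  ∀ l m, l ≤ n → m ≤ n → p l = p m → l = m

/-- `(p 0, …, p n = p 0)` is an elementary circuit. -/
def IsElemCircuit (n : ℕ) (p : ℕ → Fin k) : Prop :=
  0 < n ∧ p n = p 0 ∧ ∀ l m, l < n → m < n → p l = p m → l = m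

/-- The set of arcs of a circuit, i.e. the circuit seen as a directed graph. -/
def circArcSet (n : ℕ) (p : ℕ → Fin k) : Set (Fin k × Fin k) :=
  {a | ∃ l < n, p l = a.1 ∧ p (l + 1) = a.2}

/-- No linear form of the family `E₁` vanishes at `A`. -/
def NoE1Vanishes (A : MPMat k) : Prop :=
  ∀ (n₁ n₂ : ℕ) (p₁ p₂ : ℕ → Fin k), IsElemCircuit n₁ p₁ → IsElemCircuit n₂ p₂ →
    circArcSet n₁ p₁ ≠ circArcSet n₂ p₂ →
    evalForm (fun i j => circCoeff n₁ p₁ i j - circCoeff n₂ p₂ i j) A ≠ 0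

/-- No linear form of the family `E₂` vanishes at `A`. -/
def NoE2Vanishes (A : MPMat k) : Prop :=
  ∀ (i κ : Fin k) (n₁ n₂ nc : ℕ) (p₁ p₂ pc : ℕ → Fin k),
    i ≠ κ → IsElemPath n₁ p₁ → IsElemPath n₂ p₂ →
    p₁ 0 = i → p₂ 0 = i → p₁ n₁ = κ → p₂ n₂ = κ →
    IsElemCircuit nc pc → (∃ l < nc, pc l = κ) →
    ¬(n₁ = n₂ ∧ ∀ l ≤ n₁, p₁ l = p₂ l) →
    evalForm (fun a b => pathCoeff n₁ p₁ a b - (n₁ : ℝ) * circCoeff nc pc a b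
      - pathCoeff n₂ p₂ a b + (n₂ : ℝ) * circCoeff nc pc a b) A ≠ 0

open Classical in
/-- No linear form of the family `E₃` vanishes at `(A, B)`. -/
def NoE3Vanishes (A B : MPMat k) : Prop :=
  ∀ (i₁ i₂ j₁ j₂ m₁ m₂ κ : Fin k) (nc n₁ n₂ q₁ q₂ r₁ r₂ : ℕ)
    (pc pi₁ pi₂ pm₁ pm₂ pj₁ pj₂ : ℕ → Fin k),
    m₁ ≠ m₂ →
    IsElemCircuit nc pc → (∃ l < nc, pc l = κ) →
    IsElemPath n₁ pi₁ → pi₁ 0 = i₁ → pi₁ n₁ = κ →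
    IsElemPath n₂ pi₂ → pi₂ 0 = i₂ → pi₂ n₂ = κ →
    IsElemPath q₁ pm₁ → pm₁ 0 = m₁ → pm₁ q₁ = κ →
    IsElemPath q₂ pm₂ → pm₂ 0 = m₂ → pm₂ q₂ = κ →
    pj₁ 0 = i₁ → pj₁ r₁ = j₁ → r₁ ≤ 2 * k * nc →
    pj₂ 0 = i₂ → pj₂ r₂ = j₂ → r₂ ≤ 2 * k * nc →
    evalForm2
      (fun a b => pathCoeff r₁ pj₁ a b - pathCoeff n₁ pi₁ a b + pathCoeff q₁ pm₁ a b
        - pathCoeff r₂ pj₂ a b + pathCoeff n₂ pi₂ a b - pathCoeff q₂ pm₂ a b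
        - ((r₁ : ℝ) - (n₁ : ℝ) + (q₁ : ℝ) - (r₂ : ℝ) + (n₂ : ℝ) - (q₂ : ℝ))
            * circCoeff nc pc a b)
      (fun a b => (if a = j₁ ∧ b = m₁ then (1 : ℝ) else 0)
        - (if a = j₂ ∧ b = m₂ then (1 : ℝ) else 0))
      A B ≠ 0

/-- Negation on `ℝ_max` (fixing `-∞`). -/
def negB : Rmax → Rmax := WithBot.map fun x : ℝ => -x

/-- `Ã`, the matrix `A` normalized by its max-plus spectral radius:
`Ã i j = A i j - ρ_max(A)`. -/
def tildeM (A : MPMat k) : MPMat k := fun i j => A i j + negB (mpRho A)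

/-- `B⁺ = ⊕_{n=1}^{k} B^{⊗n}`. -/
def mpPlus (B : MPMat k) : MPMat k :=
  fun i j => (Finset.Icc 1 k).sup fun n => mpPow B n i j

/-- The index (in `ℕ`) of the smallest node of the critical graph of `A`; this is the
node `κ(A)`, the smallest node of the lexicographically smallest elementary circuit of
`G^c(A)`. -/
def kappaN (A : MPMat k) : ℕ := sInf {m : ℕ | ∃ h : m < k, IsCritNode A ⟨m, h⟩}

/-- The node `κ(A)` (with a default value, used only when `Fin k` would be empty or the
critical graph trivial). -/
def kappa (A : MPMat k) (dflt : Fin k) : Fin k :=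
  if h : kappaN A < k then ⟨kappaN A, h⟩ else dflt

/-- The reduced matrix `Ā` associated to `A`:
`Ā i j = Ã i j - Ã⁺ i κ(A) + Ã⁺ j κ(A)`. -/
def barM (A : MPMat k) : MPMat k := fun i j =>
  tildeM A i j + negB (mpPlus (tildeM A) i (kappa A i)) + mpPlus (tildeM A) j (kappa A i)

/-- The matrix `B̂` associated to `A` and `B`:
`B̂ i j = B i j - Ã⁺ i κ(A) + Ã⁺ j κ(A)`. -/
def hatM (A B : MPMat k) : MPMat k := fun i j =>
  B i j + negB (mpPlus (tildeM A) i (kappa A i)) + mpPlus (tildeM A) j (kappa A i)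

/-- `A` is reduced: nonpositive entries, at least one zero in each row. -/
def IsReduced (A : MPMat k) : Prop :=
  (∀ i j, A i j ≤ 0) ∧ ∀ i, ∃ j, A i j = 0

/-- `A` is strictly reduced: nonpositive entries, exactly one zero in each row. -/
def IsStrictlyReduced (A : MPMat k) : Prop :=
  (∀ i j, A i j ≤ 0) ∧ ∀ i, ∃! j, A i j = 0

/-- The graph `G(A)` is strongly connected. -/
def GStronglyConnected (A : MPMat k) : Prop :=
  ∀ i j : Fin k, ∃ (n : ℕ) (p : ℕ → Fin k), 0 < n ∧ p 0 = i ∧ p n = j ∧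
    ∀ l < n, A (p l) (p (l + 1)) ≠ ⊥

/-- `arctan`, extended by `arctan (-∞) = -π/2`. -/
def arctanB (x : Rmax) : ℝ := WithBot.recBotCoe (-(Real.pi / 2)) Real.arctan x

/-- The distance `d(A,B) = max_{i,j} |arctan (A i j) - arctan (B i j)|` on `M_k`. -/
def mpDist (A B : MPMat k) : ℝ :=
  ⨆ a : Fin k × Fin k, |arctanB (A a.1 a.2) - arctanB (B a.1 a.2)|

/-- `A` belongs to the (topological) support of `μ`, for the distance `mpDist`. -/
def MemSupport (μ : Measure (MPMat k)) (A : MPMat k) : Prop :=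
  ∀ ε : ℝ, 0 < ε → 0 < μ {B | mpDist A B < ε}

/-- `f` belongs to the support of a measure on `N`-tuples of matrices, for the product
distance. -/
def MemSupportVec {N : ℕ} (ν : Measure (Fin N → MPMat k)) (f : Fin N → MPMat k) : Prop :=
  ∀ ε : ℝ, 0 < ε → 0 < ν {g | ∀ t, mpDist (f t) (g t) < ε}

/-- `(X n)_{n}` is a sequence of i.i.d. random matrices on `(Ω, P)`. -/
def IsIID {Ω : Type*} [MeasurableSpace Ω] (P : Measure Ω) (X : ℕ → Ω → MPMat k) : Prop :=
  (∀ n, Measurable (X n)) ∧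
    ProbabilityTheory.iIndepFun X P ∧
    ∀ m n, Measure.map (X m) P = Measure.map (X n) P

/-- `(X n)_{n ≥ 1}` is a stationary sequence of random matrices on `(Ω, P)`. -/
def IsStationary {Ω : Type*} [MeasurableSpace Ω] (P : Measure Ω)
    (X : ℕ → Ω → MPMat k) : Prop :=
  ∀ m N : ℕ,
    Measure.map (fun ω => fun t : Fin N => X (1 + m + t) ω) P
      = Measure.map (fun ω => fun t : Fin N => X (1 + t) ω) P

/-- The sequence `(X n)_{n ≥ 1}` has the memory loss property: for some `N ≥ 1`, the
product `X N ⊗ ⋯ ⊗ X 1` has rank one with positive probability. -/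
def HasMLP {Ω : Type*} [MeasurableSpace Ω] (P : Measure Ω)
    (X : ℕ → Ω → MPMat k) : Prop :=
  ∃ N : ℕ, 0 < N ∧ 0 < P {ω | IsRankOne (mpProd (fun n => X n ω) N)}

end MaxPlus

open MaxPlus

namespace S5test
variable {k : ℕ}

def wgt (A : Fin k → Fin k → ℝ) (n : ℕ) (p : ℕ → Fin k) : ℝ :=
  ∑ l ∈ Finset.range n, A (p l) (p (l + 1))

lemma wgt_congr {A : Fin k → Fin k → ℝ} {n : ℕ} {p q : ℕ → Fin k}
    (h : ∀ t ≤ n, p t = q t) : wgt A n p = wgt A n q := by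
  unfold wgt
  refine Finset.sum_congr rfl fun l hl => ?_
  rw [Finset.mem_range] at hl
  rw [h l (by omega), h (l+1) (by omega)]

lemma wgt_split (A : Fin k → Fin k → ℝ) {l n : ℕ} (hl : l ≤ n) (p : ℕ → Fin k) :
    wgt A n p = wgt A l p + wgt A (n - l) (fun t => p (l + t)) := by
  unfold wgt
  rw [← Finset.sum_range_add_sum_Ico _ hl, Finset.sum_Ico_eq_sum_range]
  rfl

def cat (n1 : ℕ) (p q : ℕ → Fin k) : ℕ → Fin k := fun t => if t < n1 then p t else q (t - n1)

lemma cat_zero {n1 : ℕ} {p q : ℕ → Fin k} (h : p n1 = q 0) : cat n1 p q 0 = p 0 := by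
  unfold cat
  rcases Nat.eq_zero_or_pos n1 with h0 | h0
  · simp [h0, ← h]
  · simp [h0]

lemma cat_end (n1 n2 : ℕ) (p q : ℕ → Fin k) : cat n1 p q (n1 + n2) = q n2 := by
  unfold cat
  have : ¬ (n1 + n2 < n1) := by omega
  simp [this]

lemma wgt_cat (A : Fin k → Fin k → ℝ) {n1 : ℕ} (n2 : ℕ) {p q : ℕ → Fin k} (h : p n1 = q 0) :
    wgt A (n1 + n2) (cat n1 p q) = wgt A n1 p + wgt A n2 q := by
  rw [wgt_split A (Nat.le_add_right n1 n2) (cat n1 p q)]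
  congr 1
  · refine wgt_congr fun t ht => ?_
    unfold cat
    rcases lt_or_eq_of_le ht with h' | h'
    · simp [h']
    · subst h'; simp [h]
  · have : n1 + n2 - n1 = n2 := by omega
    rw [this]
    refine wgt_congr fun t _ => ?_
    unfold cat
    have : ¬ (n1 + t < n1) := by omega
    simp [this]

lemma splice (A : Fin k → Fin k → ℝ) {l m n : ℕ} (hlm : l < m) (hmn : m ≤ n)
    {p : ℕ → Fin k} (hp : p l = p m) :
    ∃ q : ℕ → Fin k, q 0 = p 0 ∧ q (n - (m - l)) = p n ∧
      (∀ t ≤ n - (m - l), ∃ s ≤ n, q t = p s) ∧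
      wgt A n p = wgt A (n - (m - l)) q + wgt A (m - l) (fun t => p (l + t)) := by
  set d := m - l with hd
  refine ⟨fun t => if t ≤ l then p t else p (t + d), by simp, ?_, ?_, ?_⟩
  · by_cases hc : n - d ≤ l
    · have hll : n - d = l := by omega
      have hmm : m = n := by omega
      simp only [hll, if_pos le_rfl]
      rw [hp, hmm]
    · have : n - d + d = n := by omega
      simp only [if_neg hc, this]
  · intro t ht
    by_cases hc : t ≤ l
    · exact ⟨t, by omega, by simp [hc]⟩
    · exact ⟨t + d, by omega, by simp [hc]⟩
  · have h1 : wgt A n p = wgt A l p + (wgt A d (fun t => p (l + t))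
        + wgt A (n - l - d) (fun t => p (m + t))) := by
      rw [wgt_split A (show l ≤ n by omega) p,
          wgt_split A (show d ≤ n - l by omega) (fun t => p (l + t))]
      congr 1
      congr 1
      exact wgt_congr fun t _ => by
        show p (l + (d + t)) = p (m + t)
        congr 1; omega
    have h2 : wgt A (n - d) (fun t => if t ≤ l then p t else p (t + d))
        = wgt A l p + wgt A (n - l - d) (fun t => p (m + t)) := by
      rw [show n - l - d = n - d - l by omega,
          wgt_split A (show l ≤ n - d by omega) (fun t => if t ≤ l then p t else p (t + d))]
      congr 1
      · exact wgt_congr fun t ht => by simp [ht]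
      · refine wgt_congr fun t ht => ?_
        rcases Nat.eq_zero_or_pos t with h0 | h0
        · show (if l + t ≤ l then p (l + t) else p (l + t + d)) = p (m + t)
          simp [h0, hp]
        · show (if l + t ≤ l then p (l + t) else p (l + t + d)) = p (m + t)
          have hc : ¬ (l + t ≤ l) := by omega
          simp only [hc, if_false]
          congr 1; omega
    rw [h1, h2]; ring

lemma pathWeight_toMP (A : Fin k → Fin k → ℝ) (n : ℕ) (p : ℕ → Fin k) :
    MaxPlus.pathWeight (MaxPlus.toMP A) n p = ((wgt A n p : ℝ) : Rmax) := by
  unfold MaxPlus.pathWeight MaxPlus.toMP wgt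
  exact (WithBot.coe_sum _ _).symm

lemma circAw_toMP (A : Fin k → Fin k → ℝ) {n : ℕ} (p : ℕ → Fin k) :
    MaxPlus.circAw (MaxPlus.toMP A) n p = ((wgt A n p / n : ℝ) : Rmax) := by
  unfold MaxPlus.circAw
  rw [pathWeight_toMP]
  exact WithBot.map_coe _ _

/-- The real spectral radius. -/
def rho (A : Fin k → Fin k → ℝ) : ℝ := WithBot.unbotD 0 (MaxPlus.mpRho (MaxPlus.toMP A))

lemma rho_attained (A : Fin k → Fin k → ℝ) (hk : 0 < k) :
    (MaxPlus.mpRho (MaxPlus.toMP A) = ((rho A : ℝ) : Rmax)) ∧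
      ∃ (m : ℕ) (p : ℕ → Fin k), 0 < m ∧ m ≤ k ∧ rho A = wgt A m p / m := by
  have hne : (Finset.univ : Finset (Σ n : Fin k, Fin (n.1 + 1) → Fin k)).Nonempty :=
    ⟨⟨⟨0, hk⟩, fun _ => ⟨0, hk⟩⟩, Finset.mem_univ _⟩
  obtain ⟨c, _, hc⟩ := Finset.exists_mem_eq_sup _ hne
    (fun c : Σ n : Fin k, Fin (n.1 + 1) → Fin k =>
      MaxPlus.circAw (MaxPlus.toMP A) (c.1.1 + 1)
        fun l => c.2 ⟨l % (c.1.1 + 1), Nat.mod_lt _ (Nat.succ_pos _)⟩)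
  have h2 : MaxPlus.mpRho (MaxPlus.toMP A)
      = ((wgt A (c.1.1 + 1) (fun l => c.2 ⟨l % (c.1.1 + 1), Nat.mod_lt _ (Nat.succ_pos _)⟩)
          / (c.1.1 + 1) : ℝ) : Rmax) := by
    rw [MaxPlus.mpRho, hc, circAw_toMP]
    push_cast
    ring_nf
  have h3 : MaxPlus.mpRho (MaxPlus.toMP A) = ((rho A : ℝ) : Rmax) := by
    rw [rho, h2]; rfl
  refine ⟨h3, c.1.1 + 1, fun l => c.2 ⟨l % (c.1.1 + 1), Nat.mod_lt _ (Nat.succ_pos _)⟩,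
    Nat.succ_pos _, c.1.isLt, ?_⟩
  have := h2.symm.trans h3
  rw [WithBot.coe_inj] at this
  rw [← this]
  push_cast
  ring_nf

lemma mpRho_toMP (A : Fin k → Fin k → ℝ) (hk : 0 < k) :
    MaxPlus.mpRho (MaxPlus.toMP A) = ((rho A : ℝ) : Rmax) := (rho_attained A hk).1

lemma avg_le (A : Fin k → Fin k → ℝ) {m : ℕ} {p : ℕ → Fin k} (hm : 0 < m) (hmk : m ≤ k)
    (hp : p m = p 0) : wgt A m p ≤ m * rho A := by
  have hk : 0 < k := lt_of_lt_of_le hm hmk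
  have hle := Finset.le_sup (f := fun c : Σ n : Fin k, Fin (n.1 + 1) → Fin k =>
      MaxPlus.circAw (MaxPlus.toMP A) (c.1.1 + 1)
        fun l => c.2 ⟨l % (c.1.1 + 1), Nat.mod_lt _ (Nat.succ_pos _)⟩)
    (Finset.mem_univ (⟨⟨m - 1, by omega⟩, fun t => p t.1⟩ : Σ n : Fin k, Fin (n.1 + 1) → Fin k))
  rw [← MaxPlus.mpRho, mpRho_toMP A hk] at hle
  have hle2 : MaxPlus.circAw (MaxPlus.toMP A) ((m-1) + 1) (fun l => p (l % ((m-1) + 1)))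
      ≤ ((rho A : ℝ) : Rmax) := hle
  rw [show m - 1 + 1 = m by omega] at hle2
  rw [circAw_toMP] at hle2
  rw [WithBot.coe_le_coe] at hle2
  have hw : wgt A m (fun l => p (l % m)) = wgt A m p := by
    refine wgt_congr fun t ht => ?_
    show p (t % m) = p t
    rcases lt_or_eq_of_le ht with h' | h'
    · rw [Nat.mod_eq_of_lt h']
    · subst h'; rw [Nat.mod_self, ← hp]
  rw [hw] at hle2
  have hmpos : (0:ℝ) < m := by positivity
  rw [div_le_iff₀ hmpos] at hle2
  linarith

lemma shorten_gen (A : Fin k → Fin k → ℝ) (r : ℝ) (Q : Fin k → Prop)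
    (hbase : ∀ m p, 0 < m → m ≤ k → p m = p 0 → (∀ l ≤ m, Q (p l)) → wgt A m p ≤ m * r) :
    ∀ n p, (∀ l ≤ n, Q (p l)) → ∃ m q, m ≤ n ∧ m ≤ k ∧ q 0 = p 0 ∧ q m = p n ∧
      (∀ l ≤ m, Q (q l)) ∧ wgt A n p ≤ wgt A m q + ((n - m : ℕ) : ℝ) * r := by
  intro n
  induction n using Nat.strong_induction_on with
  | _ n ih =>
    intro p hQ
    by_cases hnk : n ≤ k
    · exact ⟨n, p, le_rfl, hnk, rfl, rfl, hQ, by simp⟩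
    · push_neg at hnk
      have hk : 0 < k := by
        rcases Nat.eq_zero_or_pos k with h0 | h0
        · exact absurd (Fin.pos (p 0)) (by omega)
        · exact h0
      obtain ⟨a, ha, b, hb, hab, hpab⟩ :=
        Finset.exists_ne_map_eq_of_card_lt_of_maps_to
          (s := Finset.range (k+1)) (t := (Finset.univ : Finset (Fin k)))
          (by simp) (fun a _ => Finset.mem_univ (p a))
      rw [Finset.mem_range] at ha hb
      wlog hab2 : a < b generalizing a b
      · exact this b hb a ha hab.symm hpab.symm (by omega)
      have hbn : b ≤ n := by omega
      obtain ⟨q, hq0, hqe, hqsub, hqw⟩ := splice A hab2 hbn hpab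
      set d := b - a with hdd
      have hmid : wgt A d (fun t => p (a + t)) ≤ d * r := by
        refine hbase d (fun t => p (a + t)) (by omega) (by omega) ?_ ?_
        · show p (a + d) = p (a + 0)
          have h1 : a + d = b := by omega
          have h2 : a + 0 = a := by omega
          rw [h1, h2, hpab]
        · intro l hl
          exact hQ (a + l) (by omega)
      have hlt : n - d < n := by omega
      obtain ⟨m, q2, hm1, hm2, hq20, hq2e, hq2Q, hq2w⟩ := ih (n - d) hlt q
        (fun l hl => by obtain ⟨s, hs, hqs⟩ := hqsub l hl; rw [hqs]; exact hQ s hs)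
      refine ⟨m, q2, by omega, hm2, by rw [hq20, hq0], by rw [hq2e, hqe], hq2Q, ?_⟩
      have hcast : ((n - d - m : ℕ) : ℝ) + ((d : ℕ) : ℝ) = ((n - m : ℕ) : ℝ) := by
        rw [← Nat.cast_add]
        congr 1
        omega
      rw [hqw]
      calc wgt A (n - d) q + wgt A d (fun t => p (a + t))
          ≤ (wgt A m q2 + ((n - d - m : ℕ) : ℝ) * r) + ((d:ℕ):ℝ) * r := by
            have : ((b - a : ℕ):ℝ) = ((d:ℕ):ℝ) := by rw [hdd]
            nlinarith [hmid, hq2w]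
        _ = wgt A m q2 + ((n - m : ℕ) : ℝ) * r := by
            rw [← hcast]; ring

lemma cycle_le_gen (A : Fin k → Fin k → ℝ) (r : ℝ) (Q : Fin k → Prop)
    (hbase : ∀ m p, 0 < m → m ≤ k → p m = p 0 → (∀ l ≤ m, Q (p l)) → wgt A m p ≤ m * r) :
    ∀ n p, p n = p 0 → (∀ l ≤ n, Q (p l)) → wgt A n p ≤ n * r := by
  intro n p hclosed hQ
  obtain ⟨m, q, hmn, hmk, hq0, hqe, hqQ, hw⟩ := shorten_gen A r Q hbase n p hQ
  rcases Nat.eq_zero_or_pos m with h0 | h0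
  · subst h0
    have : wgt A 0 q = 0 := by simp [wgt]
    rw [this] at hw
    simpa using hw
  · have h2 : wgt A m q ≤ m * r := hbase m q h0 hmk (by rw [hqe, hq0, hclosed]) hqQ
    have hcast : ((m:ℕ):ℝ) + ((n - m : ℕ) : ℝ) = ((n:ℕ):ℝ) := by
      rw [← Nat.cast_add]; congr 1; omega
    have hr : (m:ℝ) * r + (((n:ℝ) - (m:ℝ))) * r = (n:ℝ) * r := by ring
    have hc2 : ((n - m : ℕ):ℝ) = (n:ℝ) - (m:ℝ) := by
      rw [Nat.cast_sub hmn]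
    rw [hc2] at hw
    linarith

lemma cycle_le (A : Fin k → Fin k → ℝ) {n : ℕ} {p : ℕ → Fin k} (hp : p n = p 0) :
    wgt A n p ≤ n * rho A :=
  cycle_le_gen A (rho A) (fun _ => True)
    (fun m p hm hmk hp _ => avg_le A hm hmk hp) n p hp (fun _ _ => trivial)

lemma shorten (A : Fin k → Fin k → ℝ) (n : ℕ) (p : ℕ → Fin k) :
    ∃ m q, m ≤ n ∧ m ≤ k ∧ q 0 = p 0 ∧ q m = p n ∧
      wgt A n p ≤ wgt A m q + ((n - m : ℕ) : ℝ) * rho A := by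
  obtain ⟨m, q, h1, h2, h3, h4, _, h6⟩ := shorten_gen A (rho A) (fun _ => True)
    (fun m p hm hmk hp _ => avg_le A hm hmk hp) n p (fun _ _ => trivial)
  exact ⟨m, q, h1, h2, h3, h4, h6⟩

lemma mpPow_le (A : Fin k → Fin k → ℝ) : ∀ (n : ℕ) (p : ℕ → Fin k),
    ((wgt A n p : ℝ) : Rmax) ≤ MaxPlus.mpPow (MaxPlus.toMP A) n (p 0) (p n) := by
  intro n
  induction n with
  | zero =>
    intro p
    show ((wgt A 0 p : ℝ) : Rmax) ≤ MaxPlus.mpId k (p 0) (p 0)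
    simp [wgt, MaxPlus.mpId]
  | succ n ih =>
    intro p
    have h1 : wgt A (n+1) p = wgt A n p + A (p n) (p (n+1)) := Finset.sum_range_succ _ _
    have h2 : ((wgt A (n+1) p : ℝ) : Rmax)
        = ((wgt A n p : ℝ) : Rmax) + ((A (p n) (p (n+1)) : ℝ) : Rmax) := by
      rw [h1]; exact WithBot.coe_add _ _
    rw [h2]
    calc ((wgt A n p : ℝ) : Rmax) + ((A (p n) (p (n+1)) : ℝ) : Rmax)
        ≤ MaxPlus.mpPow (MaxPlus.toMP A) n (p 0) (p n) + ((A (p n) (p (n+1)) : ℝ) : Rmax) :=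
          add_le_add_left (ih p) _
      _ ≤ MaxPlus.mpPow (MaxPlus.toMP A) (n+1) (p 0) (p (n+1)) := by
          exact Finset.le_sup (f := fun l => MaxPlus.mpPow (MaxPlus.toMP A) n (p 0) l
            + MaxPlus.toMP A l (p (n+1))) (Finset.mem_univ (p n))

lemma mpPow_one (A : Fin k → Fin k → ℝ) (i j : Fin k) :
    MaxPlus.mpPow (MaxPlus.toMP A) 1 i j = ((A i j : ℝ) : Rmax) := by
  show (Finset.univ.sup fun l => MaxPlus.mpId k i l + MaxPlus.toMP A l j) = _
  apply le_antisymm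
  · refine Finset.sup_le fun l _ => ?_
    by_cases hl : i = l
    · subst hl
      simp [MaxPlus.mpId, MaxPlus.toMP]
    · have : MaxPlus.mpId k i l = ⊥ := by simp [MaxPlus.mpId, hl]
      rw [this, WithBot.bot_add]
      exact bot_le
  · have := Finset.le_sup (f := fun l => MaxPlus.mpId k i l + MaxPlus.toMP A l j)
      (Finset.mem_univ i)
    calc ((A i j : ℝ) : Rmax) = MaxPlus.mpId k i i + MaxPlus.toMP A i j := by
          simp [MaxPlus.mpId, MaxPlus.toMP]
      _ ≤ _ := this

lemma mpPow_opt (A : Fin k → Fin k → ℝ) (hk : 0 < k) : ∀ (n : ℕ), 0 < n → ∀ i j : Fin k,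
    ∃ p : ℕ → Fin k, p 0 = i ∧ p n = j ∧
      MaxPlus.mpPow (MaxPlus.toMP A) n i j = ((wgt A n p : ℝ) : Rmax) := by
  have key : ∀ (n : ℕ) (i j : Fin k), ∃ p : ℕ → Fin k, p 0 = i ∧ p (n+1) = j ∧
      MaxPlus.mpPow (MaxPlus.toMP A) (n+1) i j = ((wgt A (n+1) p : ℝ) : Rmax) := by
    intro n
    induction n with
    | zero =>
      intro i j
      refine ⟨fun t => if t = 0 then i else j, by simp, by simp, ?_⟩
      rw [mpPow_one]
      congr 1
      show A i j = wgt A 1 (fun t => if t = 0 then i else j)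
      simp [wgt]
    | succ n ih =>
      intro i j
      obtain ⟨l0, _, hl0⟩ := Finset.exists_mem_eq_sup Finset.univ
        ⟨⟨0, hk⟩, Finset.mem_univ _⟩
        (fun l => MaxPlus.mpPow (MaxPlus.toMP A) (n+1) i l + MaxPlus.toMP A l j)
      obtain ⟨p, hp0, hpe, hpw⟩ := ih i l0
      refine ⟨fun t => if t ≤ n+1 then p t else j, by simp [hp0], by simp, ?_⟩
      have hstep : MaxPlus.mpPow (MaxPlus.toMP A) (n+2) i j
          = MaxPlus.mpPow (MaxPlus.toMP A) (n+1) i l0 + MaxPlus.toMP A l0 j := hl0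
      rw [hstep, hpw]
      have hw : wgt A (n+2) (fun t => if t ≤ n+1 then p t else j)
          = wgt A (n+1) p + A l0 j := by
        have hsp : wgt A (n+2) (fun t => if t ≤ n+1 then p t else j)
            = wgt A (n+1) (fun t => if t ≤ n+1 then p t else j)
              + A (if n+1 ≤ n+1 then p (n+1) else j) (if n+2 ≤ n+1 then p (n+2) else j) :=
          Finset.sum_range_succ _ _
        rw [hsp]
        congr 1
        · exact wgt_congr fun t ht => by simp [ht]
        · simp [hpe]
      rw [hw]
      show _ = ((wgt A (n+1) p + A l0 j : ℝ) : Rmax)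
      rw [WithBot.coe_add]
      rfl
  intro n hn i j
  obtain ⟨m, rfl⟩ : ∃ m, n = m + 1 := ⟨n - 1, by omega⟩
  exact key m i j

lemma crit_arc_exact (A : Fin k → Fin k → ℝ) (hk : 0 < k) {i j : Fin k}
    (h : MaxPlus.IsCritArc (MaxPlus.toMP A) i j) :
    ∃ (n : ℕ) (p : ℕ → Fin k) (l : ℕ), 0 < n ∧ p n = p 0 ∧ wgt A n p = n * rho A ∧
      l < n ∧ p l = i ∧ p (l+1) = j := by
  obtain ⟨n, p, hn, hcl, _, haw, l, hl, hpl, hpl1⟩ := h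
  refine ⟨n, p, l, hn, hcl, ?_, hl, hpl, hpl1⟩
  rw [circAw_toMP, mpRho_toMP A hk, WithBot.coe_inj] at haw
  have hnpos : (0:ℝ) < n := by positivity
  field_simp at haw
  linarith [haw]

lemma crit_arc_of_exact (A : Fin k → Fin k → ℝ) (hk : 0 < k) {n : ℕ} {p : ℕ → Fin k}
    (hn : 0 < n) (hcl : p n = p 0) (hw : wgt A n p = n * rho A) :
    ∀ l < n, MaxPlus.IsCritArc (MaxPlus.toMP A) (p l) (p (l+1)) := by
  intro l hl
  refine ⟨n, p, hn, hcl, ?_, ?_, l, hl, rfl, rfl⟩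
  · rw [pathWeight_toMP]; exact WithBot.coe_ne_bot
  · rw [circAw_toMP, mpRho_toMP A hk, WithBot.coe_inj, hw]
    have hnpos : (0:ℝ) < n := by positivity
    field_simp

lemma crit_complement (A : Fin k → Fin k → ℝ) (hk : 0 < k) {i j : Fin k}
    (h : MaxPlus.IsCritArc (MaxPlus.toMP A) i j) :
    ∃ (m : ℕ) (q : ℕ → Fin k), q 0 = j ∧ q m = i ∧
      wgt A m q = m * rho A + (rho A - A i j) := by
  obtain ⟨n, p, l, hn, hcl, hw, hl, hpl, hpl1⟩ := crit_arc_exact A hk h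
  set q : ℕ → Fin k := fun t => if l + 1 + t ≤ n then p (l + 1 + t) else p (l + 1 + t - n)
    with hq
  refine ⟨n - 1, q, ?_, ?_, ?_⟩
  · show (if l + 1 + 0 ≤ n then p (l + 1 + 0) else p (l + 1 + 0 - n)) = j
    have h1 : l + 1 + 0 ≤ n := by omega
    rw [if_pos h1, ← hpl1]
  · show (if l + 1 + (n-1) ≤ n then p (l + 1 + (n-1)) else p (l + 1 + (n-1) - n)) = i
    rcases Nat.eq_zero_or_pos l with h0 | h0
    · have h1 : l + 1 + (n-1) ≤ n := by omega
      rw [if_pos h1, show l + 1 + (n-1) = n by omega, hcl, ← hpl, h0]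
    · have h1 : ¬ (l + 1 + (n-1) ≤ n) := by omega
      rw [if_neg h1, show l + 1 + (n-1) - n = l by omega, hpl]
  · have hsplit : wgt A (n-1) q = wgt A (n-1-l) q + wgt A (n-1-(n-1-l)) (fun t => q (n-1-l+t)) :=
      wgt_split A (by omega) q
    have hpc1 : wgt A (n-1-l) q = wgt A (n-1-l) (fun t => p (l+1+t)) := by
      refine wgt_congr fun t ht => ?_
      show (if l + 1 + t ≤ n then p (l + 1 + t) else p (l + 1 + t - n)) = p (l+1+t)
      rw [if_pos (by omega)]
    have hpsplit : wgt A n p = wgt A (l+1) p + wgt A (n-(l+1)) (fun t => p (l+1+t)) :=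
      wgt_split A (by omega) p
    have hpc2 : wgt A (n-1-(n-1-l)) (fun t => q (n-1-l+t)) = wgt A l p := by
      rw [show n-1-(n-1-l) = l by omega]
      refine wgt_congr fun t ht => ?_
      show (if l + 1 + (n-1-l+t) ≤ n then p (l + 1 + (n-1-l+t)) else p (l + 1 + (n-1-l+t) - n))
          = p t
      rcases Nat.eq_zero_or_pos t with h0 | h0
      · subst h0
        rw [if_pos (by omega), show l + 1 + (n-1-l+0) = n by omega, hcl]
      · rw [if_neg (by omega), show l + 1 + (n-1-l+t) - n = t by omega]
    have harc : wgt A (l+1) p = wgt A l p + A i j := by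
      have := Finset.sum_range_succ (fun t => A (p t) (p (t+1))) l
      show wgt A (l+1) p = _
      unfold wgt
      rw [this, hpl, hpl1]
    have hcast : ((n - 1 : ℕ) : ℝ) = (n:ℝ) - 1 := by
      rw [Nat.cast_sub (by omega)]; norm_num
    have hc3 : wgt A (n-(l+1)) (fun t => p (l+1+t)) = wgt A (n-1-l) (fun t => p (l+1+t)) := by
      rw [show n-(l+1) = n-1-l by omega]
    rw [hsplit, hpc1, hpc2, hcast]
    rw [hc3] at hpsplit
    rw [harc] at hpsplit
    rw [hw] at hpsplit
    linarith

lemma rev_walk (A : Fin k → Fin k → ℝ) (hk : 0 < k) : ∀ (n : ℕ) (p : ℕ → Fin k),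
    (∀ l < n, MaxPlus.IsCritArc (MaxPlus.toMP A) (p l) (p (l+1))) →
    ∃ (m : ℕ) (q : ℕ → Fin k), q 0 = p n ∧ q m = p 0 ∧
      wgt A m q = m * rho A - (wgt A n p - n * rho A) := by
  intro n
  induction n with
  | zero =>
    intro p _
    exact ⟨0, fun _ => p 0, rfl, rfl, by simp [wgt]⟩
  | succ n ih =>
    intro p hcrit
    obtain ⟨m1, q1, hq10, hq1e, hq1w⟩ := crit_complement A hk (hcrit n (by omega))
    obtain ⟨m2, q2, hq20, hq2e, hq2w⟩ := ih p (fun l hl => hcrit l (by omega))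
    have hmatch : q1 m1 = q2 0 := by rw [hq1e, hq20]
    refine ⟨m1 + m2, cat m1 q1 q2, ?_, ?_, ?_⟩
    · rw [cat_zero hmatch, hq10]
    · rw [cat_end, hq2e]
    · rw [wgt_cat A m2 hmatch, hq1w, hq2w]
      have hsum : wgt A (n+1) p = wgt A n p + A (p n) (p (n+1)) := Finset.sum_range_succ _ _
      rw [hsum]
      push_cast
      ring

lemma crit_walk_exact (A : Fin k → Fin k → ℝ) (hk : 0 < k) {n : ℕ} {p : ℕ → Fin k}
    (hcl : p n = p 0) (hcrit : ∀ l < n, MaxPlus.IsCritArc (MaxPlus.toMP A) (p l) (p (l+1))) :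
    wgt A n p = n * rho A := by
  have h1 : wgt A n p ≤ n * rho A := cycle_le A hcl
  obtain ⟨m, q, hq0, hqe, hqw⟩ := rev_walk A hk n p hcrit
  have hqcl : q m = q 0 := by rw [hqe, hq0, hcl]
  have h2 : wgt A m q ≤ m * rho A := cycle_le A hqcl
  rw [hqw] at h2
  linarith

def C0 (A : Fin k → Fin k → ℝ) : ℝ := ∑ i, ∑ j, |A i j|

lemma C0_nonneg (A : Fin k → Fin k → ℝ) : 0 ≤ C0 A := by
  unfold C0
  positivity

lemma abs_le_C0 (A : Fin k → Fin k → ℝ) (a b : Fin k) : |A a b| ≤ C0 A := by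
  unfold C0
  calc |A a b| ≤ ∑ j, |A a j| :=
        Finset.single_le_sum (f := fun j => |A a j|) (fun _ _ => abs_nonneg _) (Finset.mem_univ b)
    _ ≤ ∑ i, ∑ j, |A i j| :=
        Finset.single_le_sum (f := fun i => ∑ j, |A i j|)
          (fun _ _ => Finset.sum_nonneg fun _ _ => abs_nonneg _) (Finset.mem_univ a)

lemma abs_wgt_le (A : Fin k → Fin k → ℝ) (n : ℕ) (p : ℕ → Fin k) :
    |wgt A n p| ≤ n * C0 A := by
  unfold wgt
  calc |∑ l ∈ Finset.range n, A (p l) (p (l+1))| ≤ ∑ l ∈ Finset.range n, |A (p l) (p (l+1))| :=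
        Finset.abs_sum_le_sum_abs _ _
    _ ≤ ∑ _l ∈ Finset.range n, C0 A := Finset.sum_le_sum fun l _ => abs_le_C0 A _ _
    _ = n * C0 A := by simp [mul_comm]

lemma abs_rho_le (A : Fin k → Fin k → ℝ) (hk : 0 < k) : |rho A| ≤ C0 A := by
  obtain ⟨_, m, p, hm, _, hrho⟩ := rho_attained A hk
  rw [hrho, abs_div]
  have h1 : |wgt A m p| ≤ m * C0 A := abs_wgt_le A m p
  have h2 : |(m:ℝ)| = (m:ℝ) := abs_of_nonneg (by positivity)
  rw [h2, div_le_iff₀ (by positivity : (0:ℝ) < (m:ℝ))]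
  calc |wgt A m p| ≤ m * C0 A := h1
    _ = C0 A * m := by ring

def extQ (q : Fin (k+1) → Fin k) : ℕ → Fin k :=
  fun t => q ⟨min t k, Nat.lt_succ_of_le (Nat.min_le_right t k)⟩

open Classical in
noncomputable def pathIdx (a b : Fin k) : Finset (Fin (k+1) × (Fin (k+1) → Fin k)) :=
  Finset.univ.filter fun c => extQ c.2 0 = a ∧ extQ c.2 c.1.1 = b

lemma pathIdx_nonempty (a b : Fin k) : (pathIdx a b).Nonempty := by
  have hk : 0 < k := a.pos
  refine ⟨(⟨1, by omega⟩, fun t => if t.1 = 0 then a else b), ?_⟩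
  rw [pathIdx, Finset.mem_filter]
  refine ⟨Finset.mem_univ _, ?_, ?_⟩
  · show (if (min 0 k : ℕ) = 0 then a else b) = a
    simp
  · show (if (min 1 k : ℕ) = 0 then a else b) = b
    rw [min_eq_left (by omega : 1 ≤ k)]
    simp

noncomputable def Pf (A : Fin k → Fin k → ℝ) (a b : Fin k) : ℝ :=
  (pathIdx a b).sup' (pathIdx_nonempty a b)
    (fun c => wgt A c.1.1 (extQ c.2) - (c.1.1 : ℝ) * rho A)

lemma Pf_le_short (A : Fin k → Fin k → ℝ) {a b : Fin k} {n : ℕ} {p : ℕ → Fin k}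
    (hn : n ≤ k) (h0 : p 0 = a) (he : p n = b) :
    wgt A n p - n * rho A ≤ Pf A a b := by
  set c : Fin (k+1) × (Fin (k+1) → Fin k) :=
    (⟨n, by omega⟩, fun t => p (min t.1 n)) with hc
  have hmem : c ∈ pathIdx a b := by
    rw [pathIdx, Finset.mem_filter]
    refine ⟨Finset.mem_univ _, ?_, ?_⟩
    · show p (min (min 0 k) n) = a
      rw [show min (min 0 k) n = 0 by omega, h0]
    · show p (min (min n k) n) = b
      rw [show min (min n k) n = n by omega, he]
  have hle := Finset.le_sup' (f := fun c : Fin (k+1) × (Fin (k+1) → Fin k) =>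
    wgt A c.1.1 (extQ c.2) - (c.1.1 : ℝ) * rho A) hmem
  rw [← Pf] at hle
  refine le_trans (le_of_eq ?_) hle
  show wgt A n p - n * rho A = wgt A n (extQ c.2) - (n : ℝ) * rho A
  congr 1
  refine (wgt_congr fun t ht => ?_)
  show p t = p (min (min t k) n)
  congr 1
  omega

lemma Pf_ub (A : Fin k → Fin k → ℝ) {a b : Fin k} {n : ℕ} {p : ℕ → Fin k}
    (h0 : p 0 = a) (he : p n = b) :
    wgt A n p - n * rho A ≤ Pf A a b := by
  obtain ⟨m, q, hmn, hmk, hq0, hqe, hw⟩ := shorten A n p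
  have h2 : wgt A m q - m * rho A ≤ Pf A a b := by
    refine Pf_le_short A hmk (by rw [hq0, h0]) (by rw [hqe, he])
  have hc : ((n - m : ℕ):ℝ) = (n:ℝ) - (m:ℝ) := Nat.cast_sub hmn
  rw [hc] at hw
  linarith

lemma Pf_attain (A : Fin k → Fin k → ℝ) (a b : Fin k) :
    ∃ (n : ℕ) (q : ℕ → Fin k), n ≤ k ∧ q 0 = a ∧ q n = b ∧
      Pf A a b = wgt A n q - n * rho A := by
  obtain ⟨c, hmem, hc⟩ := Finset.exists_mem_eq_sup' (pathIdx_nonempty a b)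
    (fun c : Fin (k+1) × (Fin (k+1) → Fin k) =>
      wgt A c.1.1 (extQ c.2) - (c.1.1 : ℝ) * rho A)
  rw [pathIdx, Finset.mem_filter] at hmem
  exact ⟨c.1.1, extQ c.2, Nat.lt_succ_iff.mp c.1.isLt, hmem.2.1, hmem.2.2, hc⟩

lemma Pf_self (A : Fin k → Fin k → ℝ) (a : Fin k) : 0 ≤ Pf A a a := by
  have := Pf_le_short A (Nat.zero_le k) (p := fun _ => a) rfl rfl
  simpa [wgt] using this

lemma Pf_tri (A : Fin k → Fin k → ℝ) (a b c : Fin k) :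
    Pf A a b + Pf A b c ≤ Pf A a c := by
  obtain ⟨n1, q1, _, hq10, hq1e, hw1⟩ := Pf_attain A a b
  obtain ⟨n2, q2, _, hq20, hq2e, hw2⟩ := Pf_attain A b c
  have hmatch : q1 n1 = q2 0 := by rw [hq1e, hq20]
  have := Pf_ub A (n := n1 + n2) (p := cat n1 q1 q2)
    (by rw [cat_zero hmatch, hq10]) (by rw [cat_end, hq2e])
  rw [wgt_cat A n2 hmatch] at this
  push_cast at this
  rw [hw1, hw2]
  linarith

lemma Pf_single (A : Fin k → Fin k → ℝ) (a b : Fin k) :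
    A a b - rho A ≤ Pf A a b := by
  have hk : 0 < k := a.pos
  have h := Pf_le_short A (a := a) (b := b) (n := 1) (p := fun t => if t = 0 then a else b)
    (by omega) (by simp) (by simp)
  simpa [wgt] using h

lemma Pf_lb (A : Fin k → Fin k → ℝ) (a b : Fin k) : -(2 * C0 A) ≤ Pf A a b := by
  have hk : 0 < k := a.pos
  have h1 := Pf_single A a b
  have h2 := abs_le_C0 A a b
  have h3 := abs_rho_le A hk
  rw [abs_le] at h2 h3
  linarith [h2.1, h3.2]

lemma Pf_ub_const (A : Fin k → Fin k → ℝ) (a b : Fin k) :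
    Pf A a b ≤ 2 * k * C0 A := by
  have hk : 0 < k := a.pos
  obtain ⟨n, q, hnk, _, _, hw⟩ := Pf_attain A a b
  have h1 := abs_wgt_le A n q
  have h3 := abs_rho_le A hk
  rw [abs_le] at h1 h3
  have hn : (n:ℝ) ≤ (k:ℝ) := by exact_mod_cast hnk
  have hC := C0_nonneg A
  rw [hw]
  nlinarith [h1.2, h3.1, mul_le_mul_of_nonneg_right hn hC]

open Classical in
noncomputable def Dset (A : Fin k → Fin k → ℝ) : Finset (Σ n : Fin k, Fin (n.1+1) → Fin k) :=
  Finset.univ.filter fun c => ∀ t, ¬ MaxPlus.IsCritNode (MaxPlus.toMP A) (c.2 t)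

open Classical in
noncomputable def delta (A : Fin k → Fin k → ℝ) : ℝ :=
  if h : (Dset A).Nonempty then
    min 1 (rho A - (Dset A).sup' h (fun c =>
      wgt A (c.1.1+1) (fun l => c.2 ⟨l % (c.1.1+1), Nat.mod_lt _ (Nat.succ_pos _)⟩)
        / ((c.1.1+1 : ℕ) : ℝ)))
  else 1

lemma per_closed {m : ℕ} (hm : 0 < m) (c2 : Fin m → Fin k) :
    (fun l => c2 ⟨l % m, Nat.mod_lt _ hm⟩) m = (fun l => c2 ⟨l % m, Nat.mod_lt _ hm⟩) 0 := by
  show c2 ⟨m % m, _⟩ = c2 ⟨0 % m, _⟩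
  congr 1
  rw [Fin.mk.injEq, Nat.mod_self, Nat.zero_mod]

lemma delta_pos (A : Fin k → Fin k → ℝ) (hk : 0 < k) : 0 < delta A := by
  rw [delta]
  split_ifs with h
  · refine lt_min one_pos ?_
    rw [sub_pos]
    obtain ⟨c, hmem, hc⟩ := Finset.exists_mem_eq_sup' h (fun c : Σ n : Fin k, Fin (n.1+1) → Fin k =>
      wgt A (c.1.1+1) (fun l => c.2 ⟨l % (c.1.1+1), Nat.mod_lt _ (Nat.succ_pos _)⟩)
        / ((c.1.1+1 : ℕ) : ℝ))
    rw [hc]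
    set m := c.1.1 + 1 with hm
    set p : ℕ → Fin k := fun l => c.2 ⟨l % m, Nat.mod_lt _ (Nat.succ_pos _)⟩ with hp
    have hcl : p m = p 0 := per_closed (Nat.succ_pos _) c.2
    have hmk : m ≤ k := c.1.isLt
    have hle : wgt A m p ≤ m * rho A := avg_le A (Nat.succ_pos _) hmk hcl
    have hne : wgt A m p ≠ m * rho A := by
      intro heq
      have harcs := crit_arc_of_exact A hk (Nat.succ_pos _) hcl heq
      simp only [Dset, Finset.mem_filter] at hmem
      refine hmem.2 ⟨0 % m, Nat.mod_lt _ (Nat.succ_pos _)⟩ ?_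
      exact ⟨p 1, harcs 0 (Nat.succ_pos _)⟩
    have hmpos : (0:ℝ) < ((m:ℕ):ℝ) := by positivity
    rw [div_lt_iff₀ hmpos]
    rcases lt_of_le_of_ne hle hne with hlt
    linarith [hlt]
  · exact one_pos

lemma delta_le_one (A : Fin k → Fin k → ℝ) : delta A ≤ 1 := by
  rw [delta]; split_ifs with h
  · exact min_le_left _ _
  · exact le_rfl

lemma noncrit_base (A : Fin k → Fin k → ℝ) (hk : 0 < k) :
    ∀ (m : ℕ) (p : ℕ → Fin k), 0 < m → m ≤ k → p m = p 0 →
      (∀ l ≤ m, ¬ MaxPlus.IsCritNode (MaxPlus.toMP A) (p l)) →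
      wgt A m p ≤ m * (rho A - delta A) := by
  intro m p hm hmk hcl hQ
  have hmem : (⟨⟨m - 1, by omega⟩, fun t => p t.1⟩ : Σ n : Fin k, Fin (n.1+1) → Fin k)
      ∈ Dset A := by
    simp only [Dset, Finset.mem_filter]
    refine ⟨Finset.mem_univ _, fun t => hQ t.1 ?_⟩
    have h := t.isLt
    omega
  have hne : (Dset A).Nonempty := ⟨_, hmem⟩
  have hsup := Finset.le_sup' (f := fun c : Σ n : Fin k, Fin (n.1+1) → Fin k =>
      wgt A (c.1.1+1) (fun l => c.2 ⟨l % (c.1.1+1), Nat.mod_lt _ (Nat.succ_pos _)⟩)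
        / ((c.1.1+1 : ℕ) : ℝ)) hmem
  have hsup2 : wgt A ((m-1)+1) (fun l => p (l % ((m-1)+1))) / ((((m-1)+1 : ℕ)) : ℝ)
      ≤ (Dset A).sup' hne (fun c : Σ n : Fin k, Fin (n.1+1) → Fin k =>
      wgt A (c.1.1+1) (fun l => c.2 ⟨l % (c.1.1+1), Nat.mod_lt _ (Nat.succ_pos _)⟩)
        / ((c.1.1+1 : ℕ) : ℝ)) := hsup
  rw [show m - 1 + 1 = m by omega] at hsup2
  have hw : wgt A m (fun l => p (l % m)) = wgt A m p := by
    refine wgt_congr fun t ht => ?_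
    show p (t % m) = p t
    rcases lt_or_eq_of_le ht with h' | h'
    · rw [Nat.mod_eq_of_lt h']
    · subst h'; rw [Nat.mod_self, ← hcl]
  rw [hw] at hsup2
  have hdle : delta A ≤ rho A - wgt A m p / ((m:ℕ):ℝ) := by
    rw [delta, dif_pos hne]
    exact le_trans (min_le_right _ _) (by linarith [hsup2])
  have hmpos : (0:ℝ) < ((m:ℕ):ℝ) := by positivity
  have h2 : wgt A m p / ((m:ℕ):ℝ) ≤ rho A - delta A := by linarith
  rw [div_le_iff₀ hmpos] at h2
  calc wgt A m p ≤ (rho A - delta A) * ((m:ℕ):ℝ) := h2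
    _ = ((m:ℕ):ℝ) * (rho A - delta A) := mul_comm _ _

def ExactT (A : Fin k → Fin k → ℝ) (κ : Fin k) (n : ℕ) : Prop :=
  ∃ p : ℕ → Fin k, p 0 = κ ∧ p n = κ ∧ wgt A n p = n * rho A

lemma exactT_zero (A : Fin k → Fin k → ℝ) (κ : Fin k) : ExactT A κ 0 :=
  ⟨fun _ => κ, rfl, rfl, by simp [wgt]⟩

lemma exactT_add (A : Fin k → Fin k → ℝ) (κ : Fin k) {a b : ℕ}
    (ha : ExactT A κ a) (hb : ExactT A κ b) : ExactT A κ (a + b) := by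
  obtain ⟨p, hp0, hpe, hpw⟩ := ha
  obtain ⟨q, hq0, hqe, hqw⟩ := hb
  have hmatch : p a = q 0 := by rw [hpe, hq0]
  refine ⟨cat a p q, by rw [cat_zero hmatch, hp0], by rw [cat_end, hqe], ?_⟩
  rw [wgt_cat A b hmatch, hpw, hqw]
  push_cast
  ring

lemma exactT_mul (A : Fin k → Fin k → ℝ) (κ : Fin k) {m : ℕ} (hm : ExactT A κ m) :
    ∀ c : ℕ, ExactT A κ (c * m) := by
  intro c
  induction c with
  | zero => simpa using exactT_zero A κ
  | succ c ih =>
    have := exactT_add A κ ih hm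
    rwa [show c * m + m = (c+1) * m by ring] at this

lemma cat_pres {R : Fin k → Fin k → Prop} {n1 n2 : ℕ} {p q : ℕ → Fin k}
    (hp : ∀ l < n1, R (p l) (p (l+1))) (hq : ∀ l < n2, R (q l) (q (l+1)))
    (hmatch : p n1 = q 0) :
    ∀ l < n1 + n2, R (cat n1 p q l) (cat n1 p q (l+1)) := by
  intro l hl
  unfold cat
  by_cases h1 : l < n1
  · rw [if_pos h1]
    by_cases h2 : l + 1 < n1
    · rw [if_pos h2]; exact hp l h1
    · rw [if_neg h2, show l + 1 - n1 = 0 by omega, ← hmatch,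
        show n1 = l + 1 by omega]
      exact hp l h1
  · rw [if_neg h1, if_neg (by omega : ¬ (l + 1 < n1)),
      show l + 1 - n1 = (l - n1) + 1 by omega]
    exact hq (l - n1) (by omega)

lemma routing (A : Fin k → Fin k → ℝ) (hk : 0 < k) (κ : Fin k)
    (hκ : MaxPlus.IsCritNode (MaxPlus.toMP A) κ)
    (hconn : ∀ i j, MaxPlus.IsCritNode (MaxPlus.toMP A) i →
      MaxPlus.IsCritNode (MaxPlus.toMP A) j → MaxPlus.CritConnected (MaxPlus.toMP A) i j)
    {m : ℕ} (hm : MaxPlus.HasCritCircuitLen (MaxPlus.toMP A) m) :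
    ∃ x, ExactT A κ x ∧ ExactT A κ (x + m) := by
  obtain ⟨hmpos, p, hpcl, hparc⟩ := hm
  have hv : MaxPlus.IsCritNode (MaxPlus.toMP A) (p 0) := ⟨p 1, hparc 0 hmpos⟩
  obtain ⟨s, g, hg0, hgs, hgarc⟩ := hconn κ (p 0) hκ hv
  obtain ⟨t, q, hq0, hqt, hqarc⟩ := hconn (p 0) κ hv hκ
  have hpq : p m = q 0 := by rw [hpcl, hq0]
  have hgp : g s = p 0 := hgs
  -- walk 1 : g then p then q
  have harc1 : ∀ l < m + t, MaxPlus.IsCritArc (MaxPlus.toMP A) (cat m p q l)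
      (cat m p q (l+1)) := cat_pres hparc hqarc hpq
  have hmatch1 : g s = cat m p q 0 := by rw [cat_zero hpq, hgp]
  have hW1arc : ∀ l < s + (m + t), MaxPlus.IsCritArc (MaxPlus.toMP A)
      (cat s g (cat m p q) l) (cat s g (cat m p q) (l+1)) :=
    cat_pres hgarc harc1 hmatch1
  have hW1 : ExactT A κ (s + (m + t)) := by
    refine ⟨cat s g (cat m p q), ?_, ?_, ?_⟩
    · rw [cat_zero hmatch1, hg0]
    · rw [cat_end, cat_end, hqt]
    · refine crit_walk_exact A hk ?_ hW1arc
      rw [cat_end, cat_end, hqt, cat_zero hmatch1, hg0]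
  -- walk 2 : g then p then p then q
  have hpq2 : p m = cat m p q 0 := by rw [cat_zero hpq, hpcl]
  have harc2 : ∀ l < m + (m + t), MaxPlus.IsCritArc (MaxPlus.toMP A)
      (cat m p (cat m p q) l) (cat m p (cat m p q) (l+1)) := cat_pres hparc harc1 hpq2
  have hmatch2 : g s = cat m p (cat m p q) 0 := by rw [cat_zero hpq2, hgp]
  have hW2 : ExactT A κ (s + (m + (m + t))) := by
    refine ⟨cat s g (cat m p (cat m p q)), ?_, ?_, ?_⟩
    · rw [cat_zero hmatch2, hg0]
    · rw [cat_end, cat_end, cat_end, hqt]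
    · refine crit_walk_exact A hk ?_ (cat_pres hgarc harc2 hmatch2)
      rw [cat_end, cat_end, cat_end, hqt, cat_zero hmatch2, hg0]
  refine ⟨s + (m + t), hW1, ?_⟩
  rwa [show s + (m + t) + m = s + (m + (m + t)) by omega]

lemma gcd_mem_G (G : ℕ → Prop)
    (hGadd : ∀ a b, G a → G b → G (a + b))
    (hGdiff : ∀ a b, a ≤ b → G a → G b → G (b - a)) :
    ∀ (N g h : ℕ), g + h ≤ N → 0 < g → 0 < h → G g → G h → G (Nat.gcd g h) := by
  intro N
  induction N with
  | zero => intro g h h1 h2; omega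
  | succ N ih =>
    intro g h hsum hg hh hGg hGh
    rcases lt_trichotomy g h with hlt | heq | hgt
    · rw [← Nat.gcd_sub_self_right (le_of_lt hlt)]
      exact ih g (h - g) (by omega) hg (by omega) hGg (hGdiff g h (le_of_lt hlt) hGg hGh)
    · subst heq
      rw [Nat.gcd_self]
      exact hGg
    · rw [Nat.gcd_comm, ← Nat.gcd_sub_self_right (le_of_lt hgt)]
      exact ih h (g - h) (by omega) hh (by omega) hGh (hGdiff h g (le_of_lt hgt) hGh hGg)

lemma finset_gcd_mem_G (G : ℕ → Prop)
    (hGadd : ∀ a b, G a → G b → G (a + b))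
    (hGdiff : ∀ a b, a ≤ b → G a → G b → G (b - a)) :
    ∀ S : Finset ℕ, S.Nonempty → (∀ m ∈ S, 0 < m ∧ G m) → 0 < S.gcd id ∧ G (S.gcd id) := by
  intro S hS
  induction hS using Finset.Nonempty.cons_induction with
  | singleton a =>
    intro hmem
    rw [Finset.gcd_singleton]
    simpa using hmem a (Finset.mem_singleton_self a)
  | cons a s ha hs ih =>
    intro hmem
    have h1 := hmem a (Finset.mem_cons_self a s)
    have h2 := ih fun m hm => hmem m (Finset.mem_cons_of_mem hm)
    rw [Finset.cons_eq_insert, Finset.gcd_insert]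
    have : GCDMonoid.gcd (id a) (s.gcd id) = Nat.gcd a (s.gcd id) := rfl
    rw [this]
    constructor
    · have := Nat.gcd_pos_of_pos_left (s.gcd id) h1.1
      exact this
    · exact gcd_mem_G G hGadd hGdiff (a + s.gcd id) a (s.gcd id) le_rfl h1.1 h2.1 h1.2 h2.2

lemma exists_all_large (T : ℕ → Prop) (h0 : T 0) (hadd : ∀ a b, T a → T b → T (a + b))
    (S : Finset ℕ) (hS : S.Nonempty) (hgcd : S.gcd id = 1)
    (hmem : ∀ m ∈ S, 0 < m ∧ ∃ x, T x ∧ T (x + m)) :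
    ∃ N, ∀ n ≥ N, T n := by
  set G : ℕ → Prop := fun g => ∃ x, T x ∧ T (x + g) with hG
  have hGadd : ∀ a b, G a → G b → G (a + b) := by
    rintro a b ⟨x, hx, hxa⟩ ⟨y, hy, hyb⟩
    refine ⟨x + y, hadd x y hx hy, ?_⟩
    have := hadd (x + a) (y + b) hxa hyb
    rwa [show x + a + (y + b) = x + y + (a + b) by omega] at this
  have hGdiff : ∀ a b, a ≤ b → G a → G b → G (b - a) := by
    rintro a b hab ⟨x, hx, hxa⟩ ⟨y, hy, hyb⟩
    refine ⟨(x + a) + y, hadd _ _ hxa hy, ?_⟩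
    have := hadd x (y + b) hx hyb
    rwa [show x + (y + b) = x + a + y + (b - a) by omega] at this
  have hmul : ∀ m, T m → ∀ c : ℕ, T (c * m) := by
    intro m hm c
    induction c with
    | zero => simpa using h0
    | succ c ih =>
      have := hadd _ _ ih hm
      rwa [show c * m + m = (c+1) * m by ring] at this
  have hgcdG := finset_gcd_mem_G G hGadd hGdiff S hS fun m hm => ⟨(hmem m hm).1, (hmem m hm).2⟩
  rw [hgcd] at hgcdG
  obtain ⟨x, hx, hx1⟩ := hgcdG.2
  rcases Nat.eq_zero_or_pos x with hx0 | hx0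
  · subst hx0
    refine ⟨0, fun n _ => ?_⟩
    have := hmul 1 (by simpa using hx1) n
    simpa using this
  · refine ⟨x * x, fun n hn => ?_⟩
    have hdm : x * (n / x) + n % x = n := Nat.div_add_mod n x
    have hr : n % x < x := Nat.mod_lt n hx0
    have hq : x ≤ n / x := by
      rw [Nat.le_div_iff_mul_le hx0]
      exact hn
    have hid : n = (n / x - n % x) * x + (n % x) * (x + 1) := by
      have h1 : n % x ≤ n / x := by omega
      have h2 : (n / x - n % x) * x = (n / x) * x - (n % x) * x :=
        Nat.sub_mul _ _ _
      have h3 : (n % x) * x ≤ (n / x) * x := Nat.mul_le_mul_right x h1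
      have h4 : (n % x) * (x + 1) = (n % x) * x + n % x := by ring
      have h5 : x * (n / x) = (n / x) * x := Nat.mul_comm _ _
      omega
    rw [hid]
    exact hadd _ _ (hmul x hx _) (hmul (x+1) hx1 _)

lemma crit_node_Pf_nonneg (A : Fin k → Fin k → ℝ) (hk : 0 < k) {z κ : Fin k}
    (hz : MaxPlus.IsCritNode (MaxPlus.toMP A) z) (hκ : MaxPlus.IsCritNode (MaxPlus.toMP A) κ)
    (hconn : ∀ i j, MaxPlus.IsCritNode (MaxPlus.toMP A) i →
      MaxPlus.IsCritNode (MaxPlus.toMP A) j → MaxPlus.CritConnected (MaxPlus.toMP A) i j) :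
    0 ≤ Pf A z κ + Pf A κ z := by
  obtain ⟨s1, g1, hg10, hg1e, hg1arc⟩ := hconn z κ hz hκ
  obtain ⟨t1, g2, hg20, hg2e, hg2arc⟩ := hconn κ z hκ hz
  have hmatch : g1 s1 = g2 0 := by rw [hg1e, hg20]
  have hclosed : cat s1 g1 g2 (s1 + t1) = cat s1 g1 g2 0 := by
    rw [cat_end, cat_zero hmatch, hg2e, hg10]
  have hexact : wgt A (s1 + t1) (cat s1 g1 g2) = (s1 + t1 : ℕ) * rho A :=
    crit_walk_exact A hk hclosed (cat_pres hg1arc hg2arc hmatch)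
  rw [wgt_cat A t1 hmatch] at hexact
  have h1 : wgt A s1 g1 - s1 * rho A ≤ Pf A z κ := Pf_ub A hg10 hg1e
  have h2 : wgt A t1 g2 - t1 * rho A ≤ Pf A κ z := Pf_ub A hg20 hg2e
  have hcast : ((s1 + t1 : ℕ) : ℝ) = (s1:ℝ) + (t1:ℝ) := by push_cast; ring
  rw [hcast] at hexact
  linarith

lemma entry_eq (A : Fin k → Fin k → ℝ) (hk : 0 < k) (κ : Fin k)
    (hκ : MaxPlus.IsCritNode (MaxPlus.toMP A) κ)
    (hconn : ∀ i j, MaxPlus.IsCritNode (MaxPlus.toMP A) i →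
      MaxPlus.IsCritNode (MaxPlus.toMP A) j → MaxPlus.CritConnected (MaxPlus.toMP A) i j)
    {N0 : ℕ} (hN0 : ∀ n ≥ N0, ExactT A κ n)
    {n : ℕ} (hn1 : N0 + 2*k + k + Nat.ceil ((2*k*C0 A + 4*C0 A)/(delta A)) + 1 ≤ n)
    (i j : Fin k) :
    MaxPlus.mpPow (MaxPlus.toMP A) n i j
      = (((Pf A i κ + Pf A κ j + n * rho A : ℝ)) : Rmax) := by
  classical
  set M := Nat.ceil ((2*k*C0 A + 4*C0 A)/(delta A)) with hM
  have hδ := delta_pos A hk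
  have hnpos : 0 < n := by omega
  apply le_antisymm
  · -- upper bound
    obtain ⟨p, hp0, hpe, hpw⟩ := mpPow_opt A hk n hnpos i j
    rw [hpw, WithBot.coe_le_coe]
    by_cases hcase : ∃ l ≤ n, MaxPlus.IsCritNode (MaxPlus.toMP A) (p l)
    · obtain ⟨l, hln, hz⟩ := hcase
      have hsplit : wgt A n p = wgt A l p + wgt A (n - l) (fun t => p (l + t)) :=
        wgt_split A hln p
      have h1 : wgt A l p - l * rho A ≤ Pf A i (p l) := Pf_ub A hp0 rfl
      have h2 : wgt A (n - l) (fun t => p (l + t)) - ((n - l : ℕ):ℝ) * rho A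
          ≤ Pf A (p l) j := by
        refine Pf_ub A rfl ?_
        show p (l + (n - l)) = j
        rw [show l + (n - l) = n by omega, hpe]
      have h3 : 0 ≤ Pf A (p l) κ + Pf A κ (p l) := crit_node_Pf_nonneg A hk hz hκ hconn
      have h4 : Pf A i (p l) + Pf A (p l) κ ≤ Pf A i κ := Pf_tri A _ _ _
      have h5 : Pf A κ (p l) + Pf A (p l) j ≤ Pf A κ j := Pf_tri A _ _ _
      have hcast : ((n - l : ℕ):ℝ) = (n:ℝ) - (l:ℝ) := Nat.cast_sub hln
      rw [hcast] at h2
      linarith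
    · push_neg at hcase
      obtain ⟨m, q, hmn, hmk, hq0, hqe, hqQ, hqw⟩ :=
        shorten_gen A (rho A - delta A) (fun z => ¬ MaxPlus.IsCritNode (MaxPlus.toMP A) z)
          (noncrit_base A hk) n p hcase
      have hcast : ((n - m : ℕ):ℝ) = (n:ℝ) - (m:ℝ) := Nat.cast_sub hmn
      rw [hcast] at hqw
      have hb1 : |wgt A m q| ≤ m * C0 A := abs_wgt_le A m q
      have hb2 : |rho A| ≤ C0 A := abs_rho_le A hk
      rw [abs_le] at hb1 hb2
      have hmke : (m:ℝ) ≤ (k:ℝ) := by exact_mod_cast hmk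
      have hC := C0_nonneg A
      have hwk : wgt A m q - m * rho A ≤ 2 * k * C0 A := by
        nlinarith [hb1.2, hb2.1, mul_le_mul_of_nonneg_right hmke hC]
      have hMle : (2*k*C0 A + 4*C0 A)/(delta A) ≤ (M:ℝ) := Nat.le_ceil _
      have hnM : (M:ℝ) + (k:ℝ) ≤ (n:ℝ) := by
        have : M + k ≤ n := by omega
        exact_mod_cast this
      have hdelta_big : 2*k*C0 A + 4*C0 A ≤ ((n:ℝ) - (m:ℝ)) * delta A := by
        rw [div_le_iff₀ hδ] at hMle
        have h6 : (M:ℝ) * delta A ≤ ((n:ℝ) - (m:ℝ)) * delta A := by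
          apply mul_le_mul_of_nonneg_right _ (le_of_lt hδ)
          linarith
        linarith
      have hlb1 := Pf_lb A i κ
      have hlb2 := Pf_lb A κ j
      nlinarith [hqw, hwk, hdelta_big, hlb1, hlb2]
  · -- lower bound
    obtain ⟨s, q1, hsk, hq10, hq1e, hw1⟩ := Pf_attain A i κ
    obtain ⟨t, q2, htk, hq20, hq2e, hw2⟩ := Pf_attain A κ j
    set e := n - s - t with he
    have heN0 : N0 ≤ e := by omega
    obtain ⟨c, hc0, hce, hcw⟩ := hN0 e heN0
    have hm1 : c e = q2 0 := by rw [hce, hq20]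
    have hm2 : q1 s = cat e c q2 0 := by rw [cat_zero hm1, hq1e, hc0]
    set p : ℕ → Fin k := cat s q1 (cat e c q2) with hp
    have hp0 : p 0 = i := by rw [hp, cat_zero hm2, hq10]
    have hpend : p (s + (e + t)) = j := by rw [hp, cat_end, cat_end, hq2e]
    have hlen : s + (e + t) = n := by omega
    have hwp : wgt A (s + (e + t)) p = Pf A i κ + Pf A κ j + n * rho A := by
      rw [hp, wgt_cat A (e + t) hm2, wgt_cat A t hm1, hcw]
      have hcaste : ((e + s + t : ℕ) : ℝ) = ((n:ℕ):ℝ) := by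
        rw [show e + s + t = n by omega]
      push_cast at hcaste
      rw [hw1, hw2]
      have hrho2 : (e:ℝ)*rho A + (s:ℝ)*rho A + (t:ℝ)*rho A = (n:ℝ)*rho A := by
        rw [← hcaste]; ring
      linarith [hrho2]
    have hle := mpPow_le A (s + (e + t)) p
    rw [hwp, hp0, hpend, hlen] at hle
    exact hle

end S5test

/-- every matrix with finite entries of type scs1-cyc1 has a max-plus
power of rank one. -/
theorem stmt5 (k : ℕ) (A : Fin k → Fin k → ℝ)
    (h : MaxPlus.IsScs1Cyc1 (MaxPlus.toMP A)) :
    ∃ n : ℕ, 0 < n ∧ MaxPlus.IsRankOne (MaxPlus.mpPow (MaxPlus.toMP A) n) := by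
  classical
  obtain ⟨⟨⟨κ, hκ⟩, hconn⟩, S, hS, hSc, hgcd⟩ := h
  have hk : 0 < k := κ.pos
  obtain ⟨N0, hN0⟩ := S5test.exists_all_large (S5test.ExactT A κ) (S5test.exactT_zero A κ)
    (fun a b ha hb => S5test.exactT_add A κ ha hb) S hS hgcd
    (fun m hm => ⟨(hSc m hm).1, S5test.routing A hk κ hκ hconn (hSc m hm)⟩)
  set n := N0 + 2*k + k + Nat.ceil ((2*k*S5test.C0 A + 4*S5test.C0 A)/(S5test.delta A)) + 1
    with hn
  have hval := S5test.entry_eq A hk κ hκ hconn hN0 (le_of_eq hn.symm)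
  refine ⟨n, by omega, fun i => ((S5test.Pf A i κ : ℝ) : Rmax),
    fun j => ((S5test.Pf A κ j + n * S5test.rho A : ℝ) : Rmax),
    ⟨⟨0, hk⟩, WithBot.coe_ne_bot⟩, ⟨⟨0, hk⟩, WithBot.coe_ne_bot⟩, fun i j => ?_⟩
  rw [hval i j, ← WithBot.coe_add, WithBot.coe_inj]
  ring
end
end

section
/- For every A ∈ P_k, there is an N ∈ ℕ such that every path pth from i to j on G(A) of length n ≥ N whose weight satisfies w(A,pth) = (A^{⊗n})_{ij} passes through a node of the critical graph G^c(A). -/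
open scoped BigOperators
open MeasureTheory

noncomputable section

namespace MaxPlus

variable {k : ℕ}

-- real entry and real weight
def rE (A : MPMat k) (i j : Fin k) : ℝ := WithBot.unbotD 0 (A i j)
def rW (A : MPMat k) (n : ℕ) (p : ℕ → Fin k) : ℝ :=
  ∑ l ∈ Finset.range n, rE A (p l) (p (l + 1))

lemma pathWeight_succ (A : MPMat k) (n : ℕ) (p : ℕ → Fin k) :
    pathWeight A (n+1) p = pathWeight A n p + A (p n) (p (n+1)) :=
  Finset.sum_range_succ _ n

lemma pathWeight_ne_bot_iff (A : MPMat k) (n : ℕ) (p : ℕ → Fin k) :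
    pathWeight A n p ≠ ⊥ ↔ ∀ l < n, A (p l) (p (l + 1)) ≠ ⊥ := by
  induction n with
  | zero => simp [pathWeight]
  | succ n ih =>
    rw [pathWeight_succ, WithBot.add_ne_bot, ih]
    constructor
    · rintro ⟨h1, h2⟩ l hl
      rcases Nat.lt_succ_iff_lt_or_eq.1 hl with h | rfl
      · exact h1 l h
      · exact h2
    · intro h
      exact ⟨fun l hl => h l (hl.trans (Nat.lt_succ_self n)), h n (Nat.lt_succ_self n)⟩

lemma pathWeight_eq_coe (A : MPMat k) (n : ℕ) (p : ℕ → Fin k)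
    (h : ∀ l < n, A (p l) (p (l + 1)) ≠ ⊥) :
    pathWeight A n p = ((rW A n p : ℝ) : Rmax) := by
  induction n with
  | zero => simp [pathWeight, rW]
  | succ n ih =>
    have h' : ∀ l < n, A (p l) (p (l + 1)) ≠ ⊥ :=
      fun l hl => h l (hl.trans (Nat.lt_succ_self n))
    obtain ⟨x, hx⟩ := WithBot.ne_bot_iff_exists.1 (h n (Nat.lt_succ_self n))
    have hre : rE A (p n) (p (n+1)) = x := by rw [rE, ← hx]; rfl
    rw [pathWeight_succ, ih h', ← hx]
    simp only [rW, Finset.sum_range_succ, WithBot.coe_add, hre]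

lemma pathWeight_congr (A : MPMat k) (n : ℕ) (p q : ℕ → Fin k)
    (h : ∀ l ≤ n, p l = q l) : pathWeight A n p = pathWeight A n q := by
  unfold pathWeight
  refine Finset.sum_congr rfl fun l hl => ?_
  rw [Finset.mem_range] at hl
  rw [h l hl.le, h (l+1) hl]

lemma rW_congr (A : MPMat k) (n : ℕ) (p q : ℕ → Fin k)
    (h : ∀ l ≤ n, p l = q l) : rW A n p = rW A n q := by
  unfold rW
  refine Finset.sum_congr rfl fun l hl => ?_
  rw [Finset.mem_range] at hl
  rw [h l hl.le, h (l+1) hl]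

lemma pathWeight_add (A : MPMat k) (a b : ℕ) (p : ℕ → Fin k) :
    pathWeight A (a+b) p = pathWeight A a p + pathWeight A b (fun s => p (a+s)) := by
  unfold pathWeight
  rw [Finset.sum_range_add]
  simp [Nat.add_assoc]

lemma pathWeight_le_mpPow (A : MPMat k) (n : ℕ) (p : ℕ → Fin k) :
    pathWeight A n p ≤ mpPow A n (p 0) (p n) := by
  induction n with
  | zero => simp [pathWeight, mpPow, mpId]
  | succ n ih =>
    rw [pathWeight_succ]
    calc pathWeight A n p + A (p n) (p (n+1))
        ≤ mpPow A n (p 0) (p n) + A (p n) (p (n+1)) := add_le_add_left ih _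
      _ ≤ mpPow A (n+1) (p 0) (p (n+1)) :=
          Finset.le_sup (f := fun l => mpPow A n (p 0) l + A l (p (n+1))) (Finset.mem_univ (p n))

lemma mpPow_superadd (A : MPMat k) (a b : ℕ) (i l j : Fin k) :
    mpPow A a i l + mpPow A b l j ≤ mpPow A (a+b) i j := by
  induction b generalizing j with
  | zero =>
    by_cases h : l = j
    · subst h; simp [mpPow, mpId]
    · simp [mpPow, mpId, h]
  | succ b ih =>
    have hne : (Finset.univ : Finset (Fin k)).Nonempty := ⟨i, Finset.mem_univ i⟩
    obtain ⟨m, _, hm⟩ := Finset.exists_mem_eq_sup Finset.univ hne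
      (fun m => mpPow A b l m + A m j)
    show mpPow A a i l + Finset.univ.sup (fun m => mpPow A b l m + A m j) ≤ _
    rw [hm, ← add_assoc]
    calc mpPow A a i l + mpPow A b l m + A m j
        ≤ mpPow A (a+b) i m + A m j := add_le_add_left (ih m) _
      _ ≤ mpPow A (a+b+1) i j :=
          Finset.le_sup (f := fun m => mpPow A (a+b) i m + A m j) (Finset.mem_univ m)

lemma memMk_mpPow (A : MPMat k) (hA : MemMk A) (n : ℕ) : MemMk (mpPow A n) := by
  induction n with
  | zero => intro i; exact ⟨i, by simp [mpPow, mpId]⟩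
  | succ n ih =>
    intro i
    obtain ⟨l, hl⟩ := ih i
    obtain ⟨j, hj⟩ := hA l
    refine ⟨j, fun hbot => ?_⟩
    have : mpPow A n i l + A l j ≤ mpPow A (n+1) i j :=
      Finset.le_sup (f := fun m => mpPow A n i m + A m j) (Finset.mem_univ l)
    rw [hbot, le_bot_iff, WithBot.add_eq_bot] at this
    tauto


def extLen (σ : Σ n : Fin k, Fin (n.1 + 1) → Fin k) : ℕ := σ.1.1 + 1
def extFun (σ : Σ n : Fin k, Fin (n.1 + 1) → Fin k) : ℕ → Fin k :=
  fun l => σ.2 ⟨l % (σ.1.1 + 1), Nat.mod_lt _ (Nat.succ_pos _)⟩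

lemma mpRho_eq (A : MPMat k) :
    mpRho A = Finset.univ.sup fun σ => circAw A (extLen σ) (extFun σ) := rfl

lemma extFun_ext_eq (σ : Σ n : Fin k, Fin (n.1 + 1) → Fin k) (q : ℕ → Fin k)
    (hq : q (extLen σ) = q 0) (h : ∀ t : Fin (σ.1.1 + 1), σ.2 t = q t.1) :
    ∀ l ≤ extLen σ, extFun σ l = q l := by
  intro l hl
  rcases Nat.lt_or_ge l (extLen σ) with h1 | h1
  · rw [extFun, h ⟨l % (σ.1.1+1), _⟩]
    simp only [extLen] at h1 ⊢
    rw [Nat.mod_eq_of_lt h1]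
  · have : l = extLen σ := le_antisymm hl h1
    subst this
    rw [extFun, h ⟨_, _⟩, hq]
    simp [extLen, Nat.mod_self]

lemma circAw_congr (A : MPMat k) (n : ℕ) (p q : ℕ → Fin k)
    (h : ∀ l ≤ n, p l = q l) : circAw A n p = circAw A n q := by
  unfold circAw
  rw [pathWeight_congr A n p q h]

lemma circAw_ne_bot_iff (A : MPMat k) (n : ℕ) (p : ℕ → Fin k) :
    circAw A n p ≠ ⊥ ↔ pathWeight A n p ≠ ⊥ := by
  unfold circAw
  cases h : pathWeight A n p with
  | none => exact Iff.rfl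
  | some x => exact ⟨fun _ => Option.some_ne_none x, fun _ => Option.some_ne_none _⟩

lemma circAw_le_mpRho (A : MPMat k) (n : ℕ) (hk : n + 1 ≤ k) (q : ℕ → Fin k)
    (hq : q (n+1) = q 0) : circAw A (n+1) q ≤ mpRho A := by
  set σ : Σ n : Fin k, Fin (n.1 + 1) → Fin k := ⟨⟨n, by omega⟩, fun t => q t.1⟩ with hσ
  have hex : ∀ l ≤ extLen σ, extFun σ l = q l :=
    extFun_ext_eq σ q hq (fun t => rfl)
  have hlen : extLen σ = n + 1 := rfl
  rw [← hlen, ← circAw_congr A (extLen σ) (extFun σ) q hex, mpRho_eq]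
  exact Finset.le_sup (f := fun σ => circAw A (extLen σ) (extFun σ)) (Finset.mem_univ σ)

lemma exists_repeat (p : ℕ → Fin k) : ∃ a b, a < b ∧ b ≤ k ∧ p a = p b := by
  have hk : 0 < k := (p 0).pos
  have hcard : Fintype.card (Fin k) < Fintype.card (Fin (k+1)) := by simp
  obtain ⟨x, y, hxy, heq⟩ :=
    Fintype.exists_ne_map_eq_of_card_lt (fun t : Fin (k+1) => p t) hcard
  rcases lt_or_gt_of_ne hxy with h | h
  · exact ⟨x, y, h, Nat.lt_succ_iff.1 y.2, heq⟩
  · exact ⟨y, x, h, Nat.lt_succ_iff.1 x.2, heq.symm⟩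

lemma exists_walk (A : MPMat k) (hA : MemMk A) (i : Fin k) :
    ∃ p : ℕ → Fin k, p 0 = i ∧ ∀ s, A (p s) (p (s+1)) ≠ ⊥ := by
  choose f hf using hA
  refine ⟨fun s => f^[s] i, rfl, fun s => ?_⟩
  show A (f^[s] i) (f^[s+1] i) ≠ ⊥
  rw [Function.iterate_succ_apply']
  exact hf _

lemma mpRho_ne_bot (A : MPMat k) (hA : MemMk A) (hk : 0 < k) : mpRho A ≠ ⊥ := by
  obtain ⟨p, _, hp⟩ := exists_walk A hA ⟨0, hk⟩
  obtain ⟨a, b, hab, hbk, hrep⟩ := exists_repeat p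
  obtain ⟨c, hc⟩ : ∃ c, b - a = c + 1 := ⟨b - a - 1, by omega⟩
  set q : ℕ → Fin k := fun t => p (a + t) with hq
  have hq0 : q (c+1) = q 0 := by
    simp only [hq]
    rw [← hc, Nat.add_sub_cancel' hab.le, Nat.add_zero, hrep]
  have hle : circAw A (c+1) q ≤ mpRho A := circAw_le_mpRho A c (by omega) q hq0
  have hne : circAw A (c+1) q ≠ ⊥ := by
    rw [circAw_ne_bot_iff, pathWeight_ne_bot_iff]
    intro l _
    exact hp (a + l)
  intro hbot
  rw [hbot, le_bot_iff] at hle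
  exact hne hle

lemma mpRho_attained (A : MPMat k) (hk : 0 < k) :
    ∃ σ : Σ n : Fin k, Fin (n.1 + 1) → Fin k,
      mpRho A = circAw A (extLen σ) (extFun σ) := by
  have hne : (Finset.univ : Finset (Σ n : Fin k, Fin (n.1 + 1) → Fin k)).Nonempty :=
    ⟨⟨⟨0, hk⟩, fun _ => ⟨0, hk⟩⟩, Finset.mem_univ _⟩
  obtain ⟨σ, _, hσ⟩ := Finset.exists_mem_eq_sup Finset.univ hne
    (fun σ => circAw A (extLen σ) (extFun σ))
  exact ⟨σ, hσ⟩

lemma extFun_periodic (σ : Σ n : Fin k, Fin (n.1 + 1) → Fin k) (s : ℕ) :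
    extFun σ (s + extLen σ) = extFun σ s := by
  simp [extFun, extLen, Nat.add_mod_right]


lemma ne_bot_of_le {x y : Rmax} (h : x ≤ y) (hx : x ≠ ⊥) : y ≠ ⊥ := by
  intro hb; rw [hb, le_bot_iff] at h; exact hx h

lemma mpPow_ne_bot_of_ge (A : MPMat k) (hMk : MemMk A) (m : ℕ)
    (hfin : ∀ i j, mpPow A m i j ≠ ⊥) :
    ∀ n, m ≤ n → ∀ i j, mpPow A n i j ≠ ⊥ := by
  intro n hn i j
  obtain ⟨r, rfl⟩ : ∃ r, n = r + m := ⟨n - m, by omega⟩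
  obtain ⟨l, hl⟩ := memMk_mpPow A hMk r i
  refine ne_bot_of_le (mpPow_superadd A r m i l j) ?_
  exact WithBot.add_ne_bot.2 ⟨hl, hfin l j⟩

def Bmin (A : MPMat k) (s : ℕ) : ℝ :=
  if hk : 0 < k then
    Finset.inf' Finset.univ ⟨(⟨0,hk⟩,⟨0,hk⟩), Finset.mem_univ _⟩
      (fun ij : Fin k × Fin k => WithBot.unbotD 0 (mpPow A s ij.1 ij.2))
  else 0

lemma Bmin_le (A : MPMat k) (s : ℕ) (hfin : ∀ i j, mpPow A s i j ≠ ⊥) (i j : Fin k) :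
    ((Bmin A s : ℝ) : Rmax) ≤ mpPow A s i j := by
  have hk : 0 < k := i.pos
  obtain ⟨x, hx⟩ := WithBot.ne_bot_iff_exists.1 (hfin i j)
  rw [Bmin, dif_pos hk, ← hx]
  rw [WithBot.coe_le_coe]
  have := Finset.inf'_le (b := (i, j))
    (f := fun ij : Fin k × Fin k => WithBot.unbotD 0 (mpPow A s ij.1 ij.2))
    (Finset.mem_univ _)
  rw [← hx] at this
  simpa using this

lemma pd_shift (nc : ℕ) (pd : ℕ → Fin k) (hper : ∀ s, pd (s + nc) = pd s) :
    ∀ t s, pd (s + t * nc) = pd s := by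
  intro t
  induction t with
  | zero => simp
  | succ t ih =>
    intro s
    have : s + (t+1) * nc = (s + t * nc) + nc := by ring
    rw [this, hper, ih]

lemma pathWeight_loop (A : MPMat k) (nc : ℕ) (pd : ℕ → Fin k)
    (hper : ∀ s, pd (s + nc) = pd s) (w : ℝ) (hw : pathWeight A nc pd = ((w : ℝ) : Rmax)) :
    ∀ t : ℕ, pathWeight A (t * nc) pd = (((t : ℝ) * w : ℝ) : Rmax) := by
  intro t
  induction t with
  | zero => simp [pathWeight]
  | succ t ih =>
    have hstep : pathWeight A nc (fun s => pd (t * nc + s)) = pathWeight A nc pd := by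
      refine pathWeight_congr A nc _ pd fun l _ => ?_
      rw [Nat.add_comm]
      exact pd_shift nc pd hper t l
    have : (t+1) * nc = t * nc + nc := by ring
    rw [this, pathWeight_add, ih, hstep, hw, ← WithBot.coe_add]
    apply congrArg
    push_cast
    ring

lemma lower_bound (A : MPMat k) (hMk : MemMk A) (m : ℕ) (hm : 0 < m)
    (hfin : ∀ i j, mpPow A m i j ≠ ⊥)
    (nc : ℕ) (hnc : 0 < nc) (pd : ℕ → Fin k) (hper : ∀ s, pd (s + nc) = pd s)
    (ρ : ℝ) (hw : pathWeight A nc pd = (((nc : ℝ) * ρ : ℝ) : Rmax)) :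
    ∃ C : ℝ, ∀ n, 2*m ≤ n → ∀ i j, (((n : ℝ) * ρ + C : ℝ) : Rmax) ≤ mpPow A n i j := by
  have hicc : (m : ℕ) ∈ Finset.Icc m (m + nc) := by simp
  set β2 : ℝ := Finset.inf' (Finset.Icc m (m+nc)) ⟨m, hicc⟩ (Bmin A) with hβ2
  refine ⟨Bmin A m + β2 - (2*(m:ℝ)+nc)*|ρ|, fun n hn i j => ?_⟩
  set κ := pd 0 with hκ
  obtain ⟨s, hs⟩ : ∃ s, n = 2*m + s := ⟨n - 2*m, by omega⟩
  set t := s / nc with ht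
  set r := s % nc with hr
  have hrnc : r < nc := Nat.mod_lt _ hnc
  have h1 : t * nc + r = s := by
    rw [ht, hr, Nat.mul_comm]; exact Nat.div_add_mod s nc
  have hdecomp : n = m + (t * nc + (m + r)) := by omega
  have hchain : mpPow A m i κ + (mpPow A (t*nc) κ κ + mpPow A (m+r) κ j)
      ≤ mpPow A n i j := by
    rw [hdecomp]
    calc mpPow A m i κ + (mpPow A (t*nc) κ κ + mpPow A (m+r) κ j)
        ≤ mpPow A m i κ + mpPow A (t*nc + (m+r)) κ j := by
          exact add_le_add_right (mpPow_superadd A (t*nc) (m+r) κ κ j) _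
      _ ≤ mpPow A (m + (t*nc + (m+r))) i j := mpPow_superadd A m _ i κ j
  have hloopend : pd (t * nc) = κ := by
    have := pd_shift nc pd hper t 0
    simpa using this
  have hloop : (((t : ℝ) * ((nc:ℝ) * ρ) : ℝ) : Rmax) ≤ mpPow A (t*nc) κ κ := by
    rw [← pathWeight_loop A nc pd hper _ hw t]
    have := pathWeight_le_mpPow A (t*nc) pd
    rwa [hloopend, hκ] at this
  have hfin2 : ∀ i' j', mpPow A (m+r) i' j' ≠ ⊥ :=
    mpPow_ne_bot_of_ge A hMk m hfin (m+r) (by omega) 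
  have hB1 : ((Bmin A m : ℝ) : Rmax) ≤ mpPow A m i κ := Bmin_le A m hfin i κ
  have hB2 : ((β2 : ℝ) : Rmax) ≤ mpPow A (m+r) κ j := by
    refine le_trans ?_ (Bmin_le A (m+r) hfin2 κ j)
    rw [WithBot.coe_le_coe, hβ2]
    exact Finset.inf'_le _ (by simp; omega)
  have hsum : (((Bmin A m) + ((t:ℝ) * ((nc:ℝ)*ρ) + β2) : ℝ) : Rmax)
      ≤ mpPow A n i j := by
    refine le_trans ?_ hchain
    rw [WithBot.coe_add, WithBot.coe_add]
    exact add_le_add hB1 (add_le_add hloop hB2)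
  refine le_trans ?_ hsum
  rw [WithBot.coe_le_coe]
  have htnc : ((t * nc : ℕ) : ℝ) = (n : ℝ) - 2*m - r := by
    have : n = 2*m + (t * nc + r) := by omega
    rw [this]; push_cast; ring
  have habs1 : (n:ℝ) * ρ - ((t:ℝ) * ((nc:ℝ)*ρ)) ≤ (2*(m:ℝ)+nc)*|ρ| := by
    have h2 : (t:ℝ) * ((nc:ℝ)*ρ) = ((t*nc : ℕ) : ℝ) * ρ := by push_cast; ring
    rw [h2, htnc]
    have hρ1 : ρ ≤ |ρ| := le_abs_self ρ
    have hρ2 : -|ρ| ≤ ρ := neg_abs_le ρ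
    have hrn : (r : ℝ) ≤ (nc : ℝ) := by exact_mod_cast hrnc.le
    have hm0 : (0:ℝ) ≤ (m:ℝ) := Nat.cast_nonneg m
    have hr0 : (0:ℝ) ≤ (r:ℝ) := Nat.cast_nonneg r
    nlinarith [abs_nonneg ρ]
  linarith


lemma upper_bound (A : MPMat k) (ρ' M' : ℝ)
    (Hcirc : ∀ (c : ℕ) (q : ℕ → Fin k), 0 < c → c ≤ k → q c = q 0 →
      (∀ l < c, A (q l) (q (l+1)) ≠ ⊥) → (∀ l < c, ¬IsCritNode A (q l)) →
      rW A c q ≤ c * ρ')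
    (HM : ∀ i j, rE A i j ≤ M') (hM : ρ' ≤ M') :
    ∀ n, ∀ p : ℕ → Fin k, (∀ l < n, A (p l) (p (l+1)) ≠ ⊥) →
      (∀ l ≤ n, ¬IsCritNode A (p l)) →
      rW A n p ≤ n * ρ' + k * (M' - ρ') := by
  intro n
  induction n using Nat.strong_induction_on with
  | _ n IH =>
  intro p harc hcrit
  by_cases hnk : n ≤ k
  · have h1 : rW A n p ≤ n * M' := by
      calc rW A n p ≤ ∑ _l ∈ Finset.range n, M' :=
            Finset.sum_le_sum (fun l _ => HM _ _)
        _ = n * M' := by simp [Finset.sum_const, nsmul_eq_mul]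
    have h2 : ((n:ℝ)) ≤ k := by exact_mod_cast hnk
    nlinarith
  · push_neg at hnk
    obtain ⟨a, b, hab, hbk, hrep⟩ := exists_repeat p
    set c := b - a with hc
    have hc0 : 0 < c := by omega
    have hck : c ≤ k := by omega
    have hacb : a + c = b := by omega
    set g : ℕ → ℝ := fun u => rE A (p u) (p (u+1)) with hg
    set q : ℕ → Fin k := fun t => p (a + t) with hq
    have hqc : q c = q 0 := by
      simp only [hq, hacb, Nat.add_zero]
      exact hrep.symm
    have hloop : rW A c q ≤ c * ρ' := by
      refine Hcirc c q hc0 hck hqc (fun l hl => ?_) (fun l hl => ?_)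
      · exact harc (a + l) (by omega)
      · exact hcrit (a + l) (by omega)
    set p' : ℕ → Fin k := fun u => if u ≤ a then p u else p (u + c) with hp'
    have hpa : ∀ t, a ≤ t → p' t = p (t + c) := by
      intro t ht
      rcases eq_or_lt_of_le ht with rfl | hlt
      · simp only [hp', if_pos (le_refl a)]
        rw [hrep, ← hacb]
      · simp only [hp', if_neg (by omega : ¬ t ≤ a)]
    have harc' : ∀ l < n - c, A (p' l) (p' (l+1)) ≠ ⊥ := by
      intro l hl
      rcases Nat.lt_or_ge l a with h | h
      · have e1 : p' l = p l := by simp only [hp', if_pos h.le]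
        have e2 : p' (l+1) = p (l+1) := by simp only [hp', if_pos (by omega : l+1 ≤ a)]
        rw [e1, e2]; exact harc l (by omega)
      · rw [hpa l h, hpa (l+1) (by omega)]
        have : l + 1 + c = l + c + 1 := by omega
        rw [this]
        exact harc (l + c) (by omega)
    have hcrit' : ∀ l ≤ n - c, ¬IsCritNode A (p' l) := by
      intro l hl
      rcases le_or_gt l a with h | h
      · have : p' l = p l := by simp only [hp', if_pos h]
        rw [this]; exact hcrit l (by omega)
      · rw [hpa l h.le]; exact hcrit (l + c) (by omega)
    have hIH := IH (n - c) (by omega) p' harc' hcrit'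
    -- sum splitting
    have e1 : rW A n p = (∑ u ∈ Finset.range a, g u) +
        ((∑ u ∈ Finset.range c, g (a+u)) + ∑ u ∈ Finset.range (n-b), g (a+(c+u))) := by
      have hn : n = a + (c + (n - b)) := by omega
      calc rW A n p = ∑ u ∈ Finset.range (a + (c + (n-b))), g u := by rw [← hn]; rfl
        _ = (∑ u ∈ Finset.range a, g u) + ∑ u ∈ Finset.range (c + (n-b)), g (a+u) :=
            Finset.sum_range_add g a (c + (n-b))
        _ = (∑ u ∈ Finset.range a, g u) +
            ((∑ u ∈ Finset.range c, g (a+u)) + ∑ u ∈ Finset.range (n-b), g (a+(c+u))) := by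
            rw [Finset.sum_range_add (fun u => g (a+u)) c (n-b)]
    have e2 : rW A c q = ∑ u ∈ Finset.range c, g (a+u) := by
      refine Finset.sum_congr rfl fun u _ => rfl
    have e3 : rW A (n-c) p' = (∑ u ∈ Finset.range a, g u) +
        ∑ u ∈ Finset.range (n-b), g (a+(c+u)) := by
      have hnc : n - c = a + (n - b) := by omega
      calc rW A (n-c) p' = ∑ u ∈ Finset.range (a + (n-b)),
            rE A (p' u) (p' (u+1)) := by rw [← hnc]; rfl
        _ = (∑ u ∈ Finset.range a, rE A (p' u) (p' (u+1))) +
            ∑ u ∈ Finset.range (n-b), rE A (p' (a+u)) (p' (a+u+1)) :=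
            Finset.sum_range_add _ a (n-b)
        _ = (∑ u ∈ Finset.range a, g u) + ∑ u ∈ Finset.range (n-b), g (a+(c+u)) := by
            refine congrArg₂ (· + ·) ?_ ?_
            · refine Finset.sum_congr rfl fun u hu => ?_
              rw [Finset.mem_range] at hu
              have eA : p' u = p u := by simp only [hp', if_pos hu.le]
              have eB : p' (u+1) = p (u+1) := by simp only [hp', if_pos (by omega : u+1 ≤ a)]
              rw [eA, eB]
            · refine Finset.sum_congr rfl fun u hu => ?_
              rw [hpa (a+u) (by omega), hpa (a+u+1) (by omega)]
              have i1 : a + u + c = a + (c + u) := by omega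
              have i2 : a + u + 1 + c = a + (c + u) + 1 := by omega
              rw [i1, i2]
    have hsplit : rW A n p = rW A c q + rW A (n-c) p' := by
      rw [e1, e2, e3]; ring
    have hcast : (c : ℝ) + ((n - c : ℕ) : ℝ) = (n : ℝ) := by
      have : c ≤ n := by omega
      push_cast [Nat.cast_sub this]; ring
    rw [hsplit]
    have : (c:ℝ) * ρ' + (((n-c:ℕ):ℝ) * ρ' + (k:ℝ) * (M' - ρ')) = n * ρ' + k * (M'-ρ') := by
      rw [← hcast]; ring
    linarith [hloop, hIH]


theorem stmt7aux (k : ℕ) (A : MPMat k) (hA : MaxPlus.MemPk A) :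
    ∃ N : ℕ, ∀ n, N ≤ n → ∀ p : ℕ → Fin k,
      MaxPlus.pathWeight A n p ≠ ⊥ →
      MaxPlus.pathWeight A n p = MaxPlus.mpPow A n (p 0) (p n) →
      ∃ l ≤ n, MaxPlus.IsCritNode A (p l) := by
  classical
  rcases Nat.eq_zero_or_pos k with rfl | hk
  · exact ⟨0, fun n _ p _ _ => (p 0).elim0⟩
  obtain ⟨hMk, m0, hm0, hfin0⟩ := hA
  -- the spectral radius is a real number
  obtain ⟨ρ, hρ⟩ := WithBot.ne_bot_iff_exists.1 (mpRho_ne_bot A hMk hk)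
  -- a circuit attaining the spectral radius
  obtain ⟨σ, hσ⟩ := mpRho_attained A hk
  set nc := extLen σ with hncdef
  set pd := extFun σ with hpddef
  have hnc : 0 < nc := Nat.succ_pos _
  have hper : ∀ s, pd (s + nc) = pd s := extFun_periodic σ
  have h1 : circAw A nc pd = ((ρ : ℝ) : Rmax) := by rw [← hσ, ← hρ]
  have hne : pathWeight A nc pd ≠ ⊥ := by
    rw [← circAw_ne_bot_iff, h1]; exact WithBot.coe_ne_bot
  obtain ⟨w, hw⟩ := WithBot.ne_bot_iff_exists.1 hne
  have hwval : w = (nc : ℝ) * ρ := by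
    have : circAw A nc pd = ((w / (nc : ℝ) : ℝ) : Rmax) := by
      rw [circAw, ← hw, WithBot.map_coe]
    rw [h1] at this
    have h2 : w / (nc : ℝ) = ρ := by exact_mod_cast this.symm
    field_simp at h2
    linarith [h2]
  have hwc : pathWeight A nc pd = (((nc : ℝ) * ρ : ℝ) : Rmax) := by
    rw [← hw, hwval]
  obtain ⟨C, hLB⟩ := lower_bound A hMk m0 hm0 hfin0 nc hnc pd hper ρ hwc
  -- the set of noncritical circuits of length at most k
  set pred : (Σ n : Fin k, Fin (n.1+1) → Fin k) → Prop := fun τ =>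
    (∀ s, ¬ IsCritNode A (extFun τ s)) ∧ pathWeight A (extLen τ) (extFun τ) ≠ ⊥
    with hpreddef
  set T : Finset (Σ n : Fin k, Fin (n.1+1) → Fin k) := Finset.univ.filter pred with hTdef
  by_cases hT : T.Nonempty
  · -- main case : there exist noncritical circuits; compare upper and lower bounds
    set ρ' : ℝ := T.sup' hT (fun τ => rW A (extLen τ) (extFun τ) / ((extLen τ : ℕ) : ℝ))
      with hρ'def
    -- ρ' < ρ
    have hρ'ρ : ρ' < ρ := by
      obtain ⟨τ, hτT, hτ⟩ := Finset.exists_mem_eq_sup' hT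
        (fun τ => rW A (extLen τ) (extFun τ) / ((extLen τ : ℕ) : ℝ))
      have hτpred : pred τ := (Finset.mem_filter.1 hτT).2
      have harcτ : ∀ l < extLen τ, A (extFun τ l) (extFun τ (l+1)) ≠ ⊥ :=
        (pathWeight_ne_bot_iff A _ _).1 hτpred.2
      have hcoe : circAw A (extLen τ) (extFun τ)
          = ((rW A (extLen τ) (extFun τ) / ((extLen τ : ℕ) : ℝ) : ℝ) : Rmax) := by
        rw [circAw, pathWeight_eq_coe A _ _ harcτ, WithBot.map_coe]
      have hle : circAw A (extLen τ) (extFun τ) ≤ mpRho A := by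
        rw [mpRho_eq]
        exact Finset.le_sup (f := fun τ => circAw A (extLen τ) (extFun τ)) (Finset.mem_univ τ)
      have hle2 : ρ' ≤ ρ := by
        have hcb : ((rW A (extLen τ) (extFun τ) / ((extLen τ : ℕ) : ℝ) : ℝ) : Rmax)
            ≤ ((ρ : ℝ) : Rmax) := by rw [← hcoe, hρ]; exact hle
        rw [hρ'def, hτ]
        exact_mod_cast hcb
      rcases lt_or_eq_of_le hle2 with h | h
      · exact h
      · exfalso
        have heq : circAw A (extLen τ) (extFun τ) = mpRho A := by
          rw [hcoe, ← hτ, ← hρ'def, h, hρ]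
        have hclose : extFun τ (extLen τ) = extFun τ 0 := by
          have := extFun_periodic τ 0
          simpa using this
        have harc : IsCritArc A (extFun τ 0) (extFun τ 1) :=
          ⟨extLen τ, extFun τ, Nat.succ_pos _, hclose, hτpred.2, heq,
            0, Nat.succ_pos _, rfl, rfl⟩
        exact hτpred.1 0 ⟨_, harc⟩
    -- noncritical circuits have average weight at most ρ'
    have Hcirc : ∀ (c : ℕ) (q : ℕ → Fin k), 0 < c → c ≤ k → q c = q 0 →
        (∀ l < c, A (q l) (q (l+1)) ≠ ⊥) → (∀ l < c, ¬IsCritNode A (q l)) →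
        rW A c q ≤ c * ρ' := by
      intro c q hc0 hck hqc harcq hncq
      obtain ⟨c', rfl⟩ : ∃ c', c = c' + 1 := ⟨c - 1, by omega⟩
      set τ : Σ n : Fin k, Fin (n.1+1) → Fin k := ⟨⟨c', by omega⟩, fun t => q t.1⟩ with hτdef
      have hex : ∀ l ≤ extLen τ, extFun τ l = q l :=
        extFun_ext_eq τ q hqc (fun t => rfl)
      have hτpred : pred τ := by
        constructor
        · intro s
          have : extFun τ s = q (s % (c'+1)) := rfl
          rw [this]
          exact hncq _ (Nat.mod_lt _ (Nat.succ_pos _))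
        · rw [pathWeight_congr A (extLen τ) (extFun τ) q hex]
          exact (pathWeight_ne_bot_iff A _ _).2 harcq
      have hτT : τ ∈ T := Finset.mem_filter.2 ⟨Finset.mem_univ _, hτpred⟩
      have hsup := Finset.le_sup'
        (fun τ => rW A (extLen τ) (extFun τ) / ((extLen τ : ℕ) : ℝ)) hτT
      rw [← hρ'def] at hsup
      have hrweq : rW A (extLen τ) (extFun τ) = rW A (c'+1) q :=
        rW_congr A (extLen τ) (extFun τ) q hex
      have hlen : (extLen τ : ℕ) = c' + 1 := rfl
      rw [hrweq, hlen] at hsup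
      have hpos : (0:ℝ) < ((c'+1 : ℕ) : ℝ) := by positivity
      have := (div_le_iff₀ hpos).1 hsup
      calc rW A (c'+1) q ≤ ρ' * ((c'+1:ℕ):ℝ) := this
        _ = ((c'+1:ℕ):ℝ) * ρ' := by ring
    -- the maximal entry
    set M' : ℝ := max ρ' (Finset.sup' Finset.univ ⟨(⟨0,hk⟩,⟨0,hk⟩), Finset.mem_univ _⟩
      (fun ij : Fin k × Fin k => rE A ij.1 ij.2)) with hM'def
    have HM : ∀ i j, rE A i j ≤ M' := fun i j =>
      le_trans (Finset.le_sup' (fun ij : Fin k × Fin k => rE A ij.1 ij.2)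
        (Finset.mem_univ (i, j))) (le_max_right _ _)
    have hMρ' : ρ' ≤ M' := le_max_left _ _
    have hUB := upper_bound A ρ' M' Hcirc HM hMρ'
    -- choice of N
    have hd : 0 < ρ - ρ' := by linarith
    obtain ⟨N0, hN0⟩ := exists_nat_gt (((k:ℝ) * (M' - ρ') - C) / (ρ - ρ'))
    refine ⟨max (2*m0) N0, fun n hn p hwne hwmax => ?_⟩
    by_contra hcon
    push_neg at hcon
    have harc := (pathWeight_ne_bot_iff A n p).1 hwne
    have hub := hUB n p harc hcon
    have hlb := hLB n (le_trans (le_max_left _ _) hn) (p 0) (p n)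
    rw [← hwmax, pathWeight_eq_coe A n p harc, WithBot.coe_le_coe] at hlb
    have hnN0 : (N0 : ℝ) ≤ (n : ℝ) := by
      exact_mod_cast le_trans (le_max_right _ _) hn
    have : ((k:ℝ) * (M' - ρ') - C) / (ρ - ρ') < (n : ℝ) := lt_of_lt_of_le hN0 hnN0
    rw [div_lt_iff₀ hd] at this
    nlinarith
  · -- degenerate case : every short circuit meets the critical graph
    refine ⟨k + 1, fun n hn p hwne hwmax => ?_⟩
    by_contra hcon
    push_neg at hcon
    have harc := (pathWeight_ne_bot_iff A n p).1 hwne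
    obtain ⟨a, b, hab, hbk, hrep⟩ := exists_repeat p
    obtain ⟨c', hc'⟩ : ∃ c', b - a = c' + 1 := ⟨b - a - 1, by omega⟩
    set q : ℕ → Fin k := fun t => p (a + t) with hqdef
    have hqc : q (c'+1) = q 0 := by
      simp only [hqdef, Nat.add_zero]
      rw [← hc', Nat.add_sub_cancel' hab.le, hrep]
    set τ : Σ n : Fin k, Fin (n.1+1) → Fin k := ⟨⟨c', by omega⟩, fun t => q t.1⟩ with hτdef
    have hex : ∀ l ≤ extLen τ, extFun τ l = q l :=
      extFun_ext_eq τ q hqc (fun t => rfl)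
    have hτpred : pred τ := by
      constructor
      · intro s
        have : extFun τ s = q (s % (c'+1)) := rfl
        rw [this, hqdef]
        exact hcon (a + s % (c'+1)) (by have := Nat.mod_lt s (y := c'+1) (by omega); omega)
      · rw [pathWeight_congr A (extLen τ) (extFun τ) q hex]
        refine (pathWeight_ne_bot_iff A _ _).2 fun l hl => ?_
        have hl' : l < c' + 1 := hl
        show A (p (a+l)) (p (a+(l+1))) ≠ ⊥
        have : a + (l + 1) = (a + l) + 1 := by omega
        rw [this]
        exact harc (a+l) (by omega)
    exact hT ⟨τ, Finset.mem_filter.2 ⟨Finset.mem_univ _, hτpred⟩⟩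


end MaxPlus
/-- for every `A ∈ P_k` there is an `N` such that every path on `G(A)` of
length `n ≥ N` of maximal weight among the paths with the same endpoints and length
(i.e. of weight `(A^{⊗n})_{ij}`) crosses the critical graph `G^c(A)`. -/
theorem stmt7 (k : ℕ) (A : MPMat k) (hA : MaxPlus.MemPk A) :
    ∃ N : ℕ, ∀ n, N ≤ n → ∀ p : ℕ → Fin k,
      MaxPlus.pathWeight A n p ≠ ⊥ →
      MaxPlus.pathWeight A n p = MaxPlus.mpPow A n (p 0) (p n) →
      ∃ l ≤ n, MaxPlus.IsCritNode A (p l) := by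
  exact MaxPlus.stmt7aux k A hA
end
end

section
/- Let A ∈ M_k have strongly connected graph G(A). If no linear form of the family E_1 ∪ E_2 vanishes at A, then the matrix Ā (defined by Ā_{ij} = Ã_{ij} − Ã^+_{iκ(A)} + Ã^+_{jκ(A)}) is strictly reduced, i.e. each of its rows contains exactly one entry equal to 0. -/
open scoped BigOperators
open MeasureTheory

noncomputable section

namespace MaxPlus

section Aux
variable {k : ℕ}

/-- Real weight of a walk (meaningful when all arcs are finite). -/
def rwt (B : MPMat k) (n : ℕ) (p : ℕ → Fin k) : ℝ :=
  ∑ l ∈ Finset.range n, ((B (p l) (p (l+1))).unbotD 0)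

/-- All arcs of the walk are finite. -/
def Fw (B : MPMat k) (n : ℕ) (p : ℕ → Fin k) : Prop :=
  ∀ l < n, B (p l) (p (l+1)) ≠ ⊥

lemma rwt_congr {B : MPMat k} {n : ℕ} {p q : ℕ → Fin k}
    (h : ∀ l ≤ n, p l = q l) : rwt B n p = rwt B n q := by
  unfold rwt
  refine Finset.sum_congr rfl fun l hl => ?_
  rw [Finset.mem_range] at hl
  rw [h l (le_of_lt hl), h (l+1) (by omega)]

lemma Fw_congr {B : MPMat k} {n : ℕ} {p q : ℕ → Fin k}
    (h : ∀ l ≤ n, p l = q l) (hF : Fw B n p) : Fw B n q := by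
  intro l hl
  rw [← h l (le_of_lt hl), ← h (l+1) (by omega)]
  exact hF l hl

lemma rwt_split (B : MPMat k) {n : ℕ} (t : ℕ) (p : ℕ → Fin k) (h : t ≤ n) :
    rwt B n p = rwt B t p + rwt B (n - t) (fun l => p (l + t)) := by
  unfold rwt
  rw [← Finset.sum_range_add_sum_Ico _ h, Finset.sum_Ico_eq_sum_range]
  congr 1
  refine Finset.sum_congr rfl fun l hl => ?_
  have h1 : t + l + 1 = l + 1 + t := by omega
  have h2 : t + l = l + t := by omega
  rw [h1, h2]

lemma Fw_prefix {B : MPMat k} {n t : ℕ} {p : ℕ → Fin k} (h : t ≤ n) (hF : Fw B n p) :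
    Fw B t p := fun l hl => hF l (lt_of_lt_of_le hl h)

lemma Fw_shift {B : MPMat k} {n t : ℕ} {p : ℕ → Fin k} (h : t ≤ n) (hF : Fw B n p) :
    Fw B (n - t) (fun l => p (l + t)) := by
  intro l hl
  show B (p (l + t)) (p (l + 1 + t)) ≠ ⊥
  have h2 : l + 1 + t = l + t + 1 := by omega
  rw [h2]
  exact hF (l + t) (by omega)

lemma pathWeight_eq_rwt {B : MPMat k} : ∀ {n : ℕ} {p : ℕ → Fin k}, Fw B n p →
    pathWeight B n p = ((rwt B n p : ℝ) : Rmax) := by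
  intro n
  induction n with
  | zero => intro p _; simp [pathWeight, rwt]
  | succ m ih =>
    intro p hF
    have hF' : Fw B m p := fun l hl => hF l (by omega)
    obtain ⟨a, ha⟩ := WithBot.ne_bot_iff_exists.mp (hF m (by omega))
    unfold pathWeight rwt
    rw [Finset.sum_range_succ, Finset.sum_range_succ]
    have h1 := ih hF'
    unfold pathWeight rwt at h1
    rw [h1, ← ha, ← WithBot.coe_add]
    simp

lemma Fw_of_pathWeight_ne_bot {B : MPMat k} {n : ℕ} {p : ℕ → Fin k}
    (h : pathWeight B n p ≠ ⊥) : Fw B n p := by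
  intro l hl hbot
  apply h
  unfold pathWeight
  have : ∀ m ≤ n, l < m → ∑ s ∈ Finset.range m, B (p s) (p (s+1)) = ⊥ := by
    intro m
    induction m with
    | zero => omega
    | succ t iht =>
      intro hm hlm
      rw [Finset.sum_range_succ]
      rcases Nat.lt_or_ge l t with h' | h'
      · rw [iht (by omega) h', WithBot.bot_add]
      · have : l = t := by omega
        subst this
        rw [hbot, WithBot.add_bot]
  exact this n le_rfl hl

/-- Walk with the loop `[a, a+d)` removed. -/
def spliceW (p : ℕ → Fin k) (a d : ℕ) : ℕ → Fin k := fun l => if l < a then p l else p (l + d)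

section Splice

variable {p : ℕ → Fin k} {a d n : ℕ}

lemma spliceW_le (hp : p a = p (a + d)) {l : ℕ} (hl : l ≤ a) : spliceW p a d l = p l := by
  unfold spliceW
  rcases lt_or_eq_of_le hl with h | h
  · rw [if_pos h]
  · subst h; rw [if_neg (lt_irrefl _), ← hp]

lemma spliceW_end (hp : p a = p (a + d)) (hdn : a + d ≤ n) :
    spliceW p a d (n - d) = p n := by
  unfold spliceW
  rw [if_neg (by omega)]
  congr 1
  omega

lemma spliceW_arc (hp : p a = p (a + d)) {l : ℕ} :
    ∃ m, (l ≤ m) ∧ m ≤ l + d ∧ spliceW p a d l = p m ∧ spliceW p a d (l+1) = p (m+1) := by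
  rcases Nat.lt_or_ge l a with h | h
  · refine ⟨l, le_rfl, by omega, ?_, ?_⟩
    · unfold spliceW; rw [if_pos h]
    · exact spliceW_le hp (by omega)
  · refine ⟨l + d, by omega, le_rfl, ?_, ?_⟩
    · unfold spliceW; rw [if_neg (by omega)]
    · unfold spliceW; rw [if_neg (by omega)]; congr 1; omega

lemma spliceW_rwt (B : MPMat k) (hp : p a = p (a + d)) (hdn : a + d ≤ n) :
    rwt B (n - d) (spliceW p a d) = rwt B n p - rwt B d (fun l => p (l + a)) := by
  have ha : a ≤ n - d := by omega
  rw [rwt_split B a (spliceW p a d) ha, rwt_split B a p (by omega),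
      rwt_split B d (fun l => p (l + a)) (by omega : d ≤ n - a)]
  have e1 : rwt B a (spliceW p a d) = rwt B a p :=
    rwt_congr (fun l hl => spliceW_le hp hl)
  have e2 : rwt B (n - d - a) (fun l => spliceW p a d (l + a)) =
      rwt B (n - a - d) (fun l => (fun l' => p (l' + a)) (l + d)) := by
    have hnn : n - d - a = n - a - d := by omega
    rw [hnn]
    refine rwt_congr fun l _ => ?_
    show spliceW p a d (l + a) = p (l + d + a)
    unfold spliceW
    rw [if_neg (by omega)]
    congr 1
    omega
  rw [e1, e2]
  ring

lemma spliceW_Fw (B : MPMat k) (hp : p a = p (a + d)) (hdn : a + d ≤ n)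
    (hF : Fw B n p) : Fw B (n - d) (spliceW p a d) := by
  intro l hl
  obtain ⟨m, hm1, hm2, e1, e2⟩ := spliceW_arc (p := p) (a := a) (d := d) hp (l := l)
  rw [e1, e2]
  exact hF m (by omega)

lemma loop_closed (hp : p a = p (a + d)) : (fun l => p (l + a)) d = (fun l => p (l + a)) 0 := by
  simp only [Nat.zero_add]
  have : d + a = a + d := by omega
  rw [this, ← hp]

lemma loop_Fw (B : MPMat k) (hdn : a + d ≤ n) (hF : Fw B n p) :
    Fw B d (fun l => p (l + a)) := by
  intro l hl
  show B (p (l + a)) (p (l + 1 + a)) ≠ ⊥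
  have h2 : l + 1 + a = l + a + 1 := by omega
  rw [h2]
  exact hF (l + a) (by omega)

end Splice

section Pow

variable {B : MPMat k}

lemma pathWeight_le_pow (B : MPMat k) : ∀ (n : ℕ) (p : ℕ → Fin k),
    pathWeight B n p ≤ mpPow B n (p 0) (p n) := by
  intro n
  induction n with
  | zero => intro p; simp [pathWeight, mpPow, mpId]
  | succ m ih =>
    intro p
    unfold pathWeight
    rw [Finset.sum_range_succ]
    show _ ≤ mpMul (mpPow B m) B (p 0) (p (m+1))
    unfold mpMul
    calc ∑ l ∈ Finset.range m, B (p l) (p (l+1)) + B (p m) (p (m+1))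
        ≤ mpPow B m (p 0) (p m) + B (p m) (p (m+1)) := by
          exact add_le_add (ih p) le_rfl
      _ ≤ _ := Finset.le_sup (f := fun l => mpPow B m (p 0) l + B l (p (m+1))) (Finset.mem_univ (p m))

lemma pow_attained (hk : 0 < k) (B : MPMat k) : ∀ (n : ℕ) (i j : Fin k),
    mpPow B n i j = ⊥ ∨ ∃ p : ℕ → Fin k, p 0 = i ∧ p n = j ∧
      pathWeight B n p = mpPow B n i j := by
  intro n
  induction n with
  | zero =>
    intro i j
    by_cases h : i = j
    · subst h
      right
      exact ⟨fun _ => i, rfl, rfl, by simp [pathWeight, mpPow, mpId]⟩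
    · left; simp [mpPow, mpId, h]
  | succ m ih =>
    intro i j
    have hne : (Finset.univ : Finset (Fin k)).Nonempty := ⟨⟨0, hk⟩, Finset.mem_univ _⟩
    obtain ⟨l₀, _, hl₀⟩ := Finset.exists_mem_eq_sup Finset.univ hne
      (fun l => mpPow B m i l + B l j)
    have hpow : mpPow B (m+1) i j = mpPow B m i l₀ + B l₀ j := hl₀
    by_cases hbot : mpPow B m i l₀ + B l₀ j = ⊥
    · left; rw [hpow, hbot]
    · right
      have h1 : mpPow B m i l₀ ≠ ⊥ := fun h => hbot (by rw [h, WithBot.bot_add])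
      rcases ih i l₀ with h | ⟨p, hp0, hpm, hpw⟩
      · exact absurd h h1
      · refine ⟨fun t => if t ≤ m then p t else j, by simp [hp0], by simp, ?_⟩
        have harc : ∀ t < m + 1,
            (if t ≤ m then p t else j) = p t ∨ (t = m ∧ (if t+1 ≤ m then p (t+1) else j) = j) := by
          intro t ht
          left; rw [if_pos (by omega)]
        unfold pathWeight
        rw [Finset.sum_range_succ, hpow, ← hpw]
        have e : ∀ t ∈ Finset.range m,
            B (if t ≤ m then p t else j) (if t+1 ≤ m then p (t+1) else j) = B (p t) (p (t+1)) := by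
          intro t ht
          rw [Finset.mem_range] at ht
          rw [if_pos (by omega), if_pos (by omega)]
        rw [Finset.sum_congr rfl e]
        show _ + B (if m ≤ m then p m else j) (if m + 1 ≤ m then p (m+1) else j) = _
        rw [if_pos (le_refl m), if_neg (by omega : ¬ m + 1 ≤ m), hpm]
        rfl

end Pow

section Rho

variable {A : MPMat k} {n : ℕ} {p : ℕ → Fin k} {ρr : ℝ}

lemma circAw_eq (hF : Fw A n p) :
    circAw A n p = ((rwt A n p / n : ℝ) : Rmax) := by
  unfold circAw
  rw [pathWeight_eq_rwt hF, WithBot.map_coe]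

lemma mod_walk_rwt (hclosed : p n = p 0) (hn : 0 < n) :
    rwt A n (fun l => p (l % n)) = rwt A n p ∧
      (Fw A n p → Fw A n (fun l => p (l % n))) := by
  have key : ∀ l < n, p (l % n) = p l ∧ p ((l+1) % n) = p (l+1) := by
    intro l hl
    constructor
    · rw [Nat.mod_eq_of_lt hl]
    · rcases Nat.lt_or_ge (l+1) n with h | h
      · rw [Nat.mod_eq_of_lt h]
      · have : l + 1 = n := by omega
        rw [this, Nat.mod_self, ← hclosed]
  constructor
  · unfold rwt
    refine Finset.sum_congr rfl fun l hl => ?_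
    rw [Finset.mem_range] at hl
    show WithBot.unbotD 0 (A (p (l % n)) (p ((l+1) % n))) = _
    rw [(key l hl).1, (key l hl).2]
  · intro hF l hl
    show A (p (l % n)) (p ((l+1) % n)) ≠ ⊥
    rw [(key l hl).1, (key l hl).2]
    exact hF l hl

lemma circ_le_rho (hclosed : p n = p 0) (hn : 0 < n) (hnk : n ≤ k) (hF : Fw A n p) :
    ((rwt A n p / n : ℝ) : Rmax) ≤ mpRho A := by
  have hn1 : n - 1 + 1 = n := by omega
  set c : Σ m : Fin k, Fin (m.1 + 1) → Fin k :=
    ⟨⟨n - 1, by omega⟩, fun t => p t.1⟩ with hc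
  have hle := Finset.le_sup (f := fun c : Σ m : Fin k, Fin (m.1 + 1) → Fin k =>
    circAw A (c.1.1 + 1) fun l => c.2 ⟨l % (c.1.1 + 1), Nat.mod_lt _ (Nat.succ_pos _)⟩)
    (Finset.mem_univ c)
  have he : circAw A (c.1.1 + 1) (fun l => c.2 ⟨l % (c.1.1 + 1), Nat.mod_lt _ (Nat.succ_pos _)⟩)
      = ((rwt A n p / n : ℝ) : Rmax) := by
    have hcfst : (c.1.1 + 1) = n := by rw [hc]; exact hn1
    have hfun : (fun l => c.2 ⟨l % (c.1.1 + 1), Nat.mod_lt _ (Nat.succ_pos _)⟩)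
        = fun l => p (l % n) := by
      funext l
      show p _ = p (l % n)
      congr 1
      simp [hcfst]
    rw [hfun, hcfst, circAw_eq ((mod_walk_rwt hclosed hn).2 hF),
        (mod_walk_rwt hclosed hn).1]
  rw [← he]
  exact hle

/-- Reduce any finite walk to one of length between 1 and `k`, same endpoints,
arcs among arcs of `p` (no weight tracking). -/
lemma lenred0 (hk : 0 < k) : ∀ n, ∀ p : ℕ → Fin k, 0 < n → Fw A n p →
    ∃ n' q, 0 < n' ∧ n' ≤ k ∧ q 0 = p 0 ∧ q n' = p n ∧ Fw A n' q := by
  intro n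
  induction n using Nat.strong_induction_on with
  | _ n ih =>
    intro p hn hF
    rcases le_or_gt n k with h | h
    · exact ⟨n, p, hn, h, rfl, rfl, hF⟩
    · obtain ⟨x, y, hxy, hpxy⟩ := Fintype.exists_ne_map_eq_of_card_lt
        (fun t : Fin (k+1) => p t.1) (by simp)
      rcases Nat.lt_or_ge x.1 y.1 with hlt | hge
      · set a := x.1; set d := y.1 - x.1
        have hp : p a = p (a + d) := by
          rw [hpxy]; congr 1; omega
        have hdn : a + d ≤ n := by
          have := y.2; omega
        have hd : 0 < d := by omega
        have := ih (n - d) (by omega) (spliceW p a d) (by have := y.2; omega)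
          (spliceW_Fw A hp hdn hF)
        obtain ⟨n', q, h1, h2, h3, h4, h5⟩ := this
        exact ⟨n', q, h1, h2, by rw [h3, spliceW_le hp (Nat.zero_le a)],
          by rw [h4, spliceW_end hp hdn], h5⟩
      · have hlt : y.1 < x.1 := by
          rcases Nat.lt_or_ge y.1 x.1 with h' | h'
          · exact h'
          · exact absurd (Fin.ext (by omega)) hxy
        set a := y.1; set d := x.1 - y.1
        have hp : p a = p (a + d) := by
          rw [← hpxy]; congr 1; omega
        have hdn : a + d ≤ n := by
          have := x.2; omega
        have hd : 0 < d := by omega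
        have := ih (n - d) (by omega) (spliceW p a d) (by have := x.2; omega)
          (spliceW_Fw A hp hdn hF)
        obtain ⟨n', q, h1, h2, h3, h4, h5⟩ := this
        exact ⟨n', q, h1, h2, by rw [h3, spliceW_le hp (Nat.zero_le a)],
          by rw [h4, spliceW_end hp hdn], h5⟩

lemma rho_coe (hk : 0 < k) (hconn : GStronglyConnected A) :
    ∃ ρr : ℝ, mpRho A = (ρr : Rmax) := by
  have i : Fin k := ⟨0, hk⟩
  obtain ⟨n, p, hn, hp0, hpn, hF⟩ := hconn i i
  obtain ⟨n', q, h1, h2, h3, h4, h5⟩ := lenred0 hk n p hn hF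
  have hclosed : q n' = q 0 := by rw [h3, h4, hp0, hpn]
  have hle := circ_le_rho hclosed h1 h2 h5
  have : mpRho A ≠ ⊥ := fun hbot => by
    rw [hbot, le_bot_iff] at hle
    exact (WithBot.coe_ne_bot) hle
  exact WithBot.ne_bot_iff_exists.mp this |>.imp fun r hr => hr.symm

/-- Every finite closed walk has average weight at most `ρ_max`. -/
lemma cw_le (hρ : mpRho A = (ρr : Rmax)) : ∀ n, ∀ p : ℕ → Fin k, 0 < n → Fw A n p →
    p n = p 0 → rwt A n p ≤ n * ρr := by
  intro n
  induction n using Nat.strong_induction_on with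
  | _ n ih =>
    intro p hn hF hclosed
    rcases le_or_gt n k with h | h
    · have := circ_le_rho hclosed hn h hF
      rw [hρ, WithBot.coe_le_coe] at this
      have hn' : (0:ℝ) < n := by exact_mod_cast hn
      calc rwt A n p = (rwt A n p / n) * n := by field_simp
        _ ≤ ρr * n := by exact mul_le_mul_of_nonneg_right this (le_of_lt hn')
        _ = n * ρr := by ring
    · have hk : 0 < k := by
        rcases Nat.eq_zero_or_pos k with h0 | h0
        · exact absurd (Fin.pos (p 0)) (by omega)
        · exact h0
      obtain ⟨x, y, hxy, hpxy⟩ := Fintype.exists_ne_map_eq_of_card_lt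
        (fun t : Fin (k+1) => p t.1) (by simp)
      -- wlog x < y
      have key : ∀ (a d : ℕ), 0 < d → a + d ≤ k → p a = p (a + d) → rwt A n p ≤ n * ρr := by
        intro a d hd hadk hp
        have hdn : a + d ≤ n := by omega
        have hq := ih (n - d) (by omega) (spliceW p a d) (by omega)
          (spliceW_Fw A hp hdn hF)
          (by rw [spliceW_end hp hdn, spliceW_le hp (Nat.zero_le a), hclosed])
        have hloop := ih d (by omega) (fun l => p (l + a)) hd
          (loop_Fw A hdn hF) (loop_closed hp)
        have hsplit := spliceW_rwt A hp hdn
        have : rwt A n p = rwt A (n-d) (spliceW p a d) + rwt A d (fun l => p (l + a)) := by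
          rw [hsplit]; ring
        rw [this]
        have hcast : ((n - d : ℕ) : ℝ) = (n : ℝ) - (d : ℝ) := by
          have : d ≤ n := by omega
          push_cast [this]; ring
        calc rwt A (n-d) (spliceW p a d) + rwt A d (fun l => p (l + a))
            ≤ (↑(n - d)) * ρr + d * ρr := add_le_add hq hloop
          _ = n * ρr := by rw [hcast]; ring
      rcases Nat.lt_or_ge x.1 y.1 with hlt | hge
      · exact key x.1 (y.1 - x.1) (by omega) (by have := y.2; omega)
          (by rw [hpxy]; congr 1; omega)
      · have hlt : y.1 < x.1 := by
          rcases Nat.lt_or_ge y.1 x.1 with h' | h'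
          · exact h'
          · exact absurd (Fin.ext (by omega)) hxy
        exact key y.1 (x.1 - y.1) (by omega) (by have := x.2; omega)
          (by rw [← hpxy]; congr 1; omega)

/-- `ρ_max` is attained by a finite closed walk of length at most `k`. -/
lemma rho_attained (hk : 0 < k) (hρ : mpRho A = (ρr : Rmax)) :
    ∃ n p, 0 < n ∧ n ≤ k ∧ p n = p 0 ∧ Fw A n p ∧ rwt A n p = n * ρr := by
  have hne : (Finset.univ : Finset (Σ m : Fin k, Fin (m.1 + 1) → Fin k)).Nonempty :=
    ⟨⟨⟨0, hk⟩, fun _ => ⟨0, hk⟩⟩, Finset.mem_univ _⟩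
  obtain ⟨c, _, hc⟩ := Finset.exists_mem_eq_sup Finset.univ hne
    (fun c : Σ m : Fin k, Fin (m.1 + 1) → Fin k =>
      circAw A (c.1.1 + 1) fun l => c.2 ⟨l % (c.1.1 + 1), Nat.mod_lt _ (Nat.succ_pos _)⟩)
  set n₀ := c.1.1 + 1 with hn₀
  set q : ℕ → Fin k := fun l => c.2 ⟨l % n₀, Nat.mod_lt _ (Nat.succ_pos _)⟩ with hq
  have hrho : mpRho A = circAw A n₀ q := hc
  have hclosed : q n₀ = q 0 := by
    show c.2 ⟨n₀ % n₀, _⟩ = c.2 ⟨0 % n₀, _⟩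
    congr 1
    simp
  have hpw : pathWeight A n₀ q ≠ ⊥ := by
    intro hbot
    rw [hρ] at hrho
    unfold circAw at hrho
    rw [hbot] at hrho
    exact WithBot.coe_ne_bot hrho
  have hF : Fw A n₀ q := Fw_of_pathWeight_ne_bot hpw
  refine ⟨n₀, q, Nat.succ_pos _, by have := c.1.2; omega, hclosed, hF, ?_⟩
  rw [hρ, circAw_eq hF] at hrho
  rw [WithBot.coe_inj] at hrho
  have hn' : (0:ℝ) < n₀ := by positivity
  field_simp at hrho
  linarith [hrho]

end Rho

section Tilde

variable {A : MPMat k} {ρr : ℝ} {n : ℕ} {p : ℕ → Fin k}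

lemma negB_coe (r : ℝ) : negB (r : Rmax) = ((-r : ℝ) : Rmax) := by
  unfold negB
  rw [WithBot.map_coe]

lemma tilde_bot (hρ : mpRho A = (ρr : Rmax)) {i j : Fin k} (h : A i j = ⊥) :
    tildeM A i j = ⊥ := by
  unfold tildeM
  rw [h, WithBot.bot_add]

lemma tilde_coe (hρ : mpRho A = (ρr : Rmax)) {i j : Fin k} {a : ℝ} (h : A i j = (a : Rmax)) :
    tildeM A i j = ((a - ρr : ℝ) : Rmax) := by
  unfold tildeM
  rw [h, hρ, negB_coe, ← WithBot.coe_add, sub_eq_add_neg]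

lemma Fw_tilde (hρ : mpRho A = (ρr : Rmax)) (hF : Fw A n p) : Fw (tildeM A) n p := by
  intro l hl
  obtain ⟨a, ha⟩ := WithBot.ne_bot_iff_exists.mp (hF l hl)
  rw [tilde_coe hρ ha.symm]
  exact WithBot.coe_ne_bot

lemma Fw_of_tilde (hρ : mpRho A = (ρr : Rmax)) (hF : Fw (tildeM A) n p) : Fw A n p := by
  intro l hl h
  exact hF l hl (tilde_bot hρ h)

lemma rwt_tilde (hρ : mpRho A = (ρr : Rmax)) (hF : Fw A n p) :
    rwt (tildeM A) n p = rwt A n p - n * ρr := by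
  unfold rwt
  have : ∀ l ∈ Finset.range n, WithBot.unbotD 0 (tildeM A (p l) (p (l+1)))
      = WithBot.unbotD 0 (A (p l) (p (l+1))) - ρr := by
    intro l hl
    rw [Finset.mem_range] at hl
    obtain ⟨a, ha⟩ := WithBot.ne_bot_iff_exists.mp (hF l hl)
    rw [tilde_coe hρ ha.symm, ← ha]
    simp
  rw [Finset.sum_congr rfl this, Finset.sum_sub_distrib]
  simp [mul_comm]

end Tilde

section Plus

variable {A : MPMat k} {ρr : ℝ} {n : ℕ} {p : ℕ → Fin k}

lemma P_le (hρ : mpRho A = (ρr : Rmax)) (hn : 0 < n) (hnk : n ≤ k) (hF : Fw A n p) :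
    ((rwt A n p - n * ρr : ℝ) : Rmax) ≤ mpPlus (tildeM A) (p 0) (p n) := by
  have h1 : pathWeight (tildeM A) n p = ((rwt A n p - n * ρr : ℝ) : Rmax) := by
    rw [pathWeight_eq_rwt (Fw_tilde hρ hF), rwt_tilde hρ hF]
  calc ((rwt A n p - n * ρr : ℝ) : Rmax) = pathWeight (tildeM A) n p := h1.symm
    _ ≤ mpPow (tildeM A) n (p 0) (p n) := pathWeight_le_pow _ n p
    _ ≤ mpPlus (tildeM A) (p 0) (p n) :=
        Finset.le_sup (f := fun m => mpPow (tildeM A) m (p 0) (p n))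
          (Finset.mem_Icc.mpr ⟨hn, hnk⟩)

/-- Weighted length reduction: reduce to length in `[1,k]` without decreasing
the normalized weight. -/
lemma lenred1 (hk : 0 < k) (hρ : mpRho A = (ρr : Rmax)) :
    ∀ n, ∀ p : ℕ → Fin k, 0 < n → Fw A n p →
    ∃ n' q, 0 < n' ∧ n' ≤ k ∧ q 0 = p 0 ∧ q n' = p n ∧ Fw A n' q ∧
      rwt A n p - n * ρr ≤ rwt A n' q - n' * ρr := by
  intro n
  induction n using Nat.strong_induction_on with
  | _ n ih =>
    intro p hn hF
    rcases le_or_gt n k with h | h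
    · exact ⟨n, p, hn, h, rfl, rfl, hF, le_rfl⟩
    · obtain ⟨x, y, hxy, hpxy⟩ := Fintype.exists_ne_map_eq_of_card_lt
        (fun t : Fin (k+1) => p t.1) (by simp)
      have key : ∀ (a d : ℕ), 0 < d → a + d ≤ k → p a = p (a + d) →
          ∃ n' q, 0 < n' ∧ n' ≤ k ∧ q 0 = p 0 ∧ q n' = p n ∧ Fw A n' q ∧
            rwt A n p - n * ρr ≤ rwt A n' q - n' * ρr := by
        intro a d hd hadk hp
        have hdn : a + d ≤ n := by omega
        have hloop := cw_le hρ d (fun l => p (l + a)) hd (loop_Fw A hdn hF) (loop_closed hp)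
        have hsplit := spliceW_rwt A hp hdn
        have hw : rwt A n p - n * ρr ≤ rwt A (n - d) (spliceW p a d) - (↑(n - d)) * ρr := by
          rw [hsplit]
          have hcast : ((n - d : ℕ) : ℝ) = (n : ℝ) - (d : ℝ) := by
            have : d ≤ n := by omega
            push_cast [this]; ring
          rw [hcast]
          linarith
        obtain ⟨n', q, h1, h2, h3, h4, h5, h6⟩ := ih (n - d) (by omega) (spliceW p a d)
          (by omega) (spliceW_Fw A hp hdn hF)
        exact ⟨n', q, h1, h2, by rw [h3, spliceW_le hp (Nat.zero_le a)],
          by rw [h4, spliceW_end hp hdn], h5, le_trans hw h6⟩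
      rcases Nat.lt_or_ge x.1 y.1 with hlt | hge
      · exact key x.1 (y.1 - x.1) (by omega) (by have := y.2; omega)
          (by rw [hpxy]; congr 1; omega)
      · have hlt : y.1 < x.1 := by
          rcases Nat.lt_or_ge y.1 x.1 with h' | h'
          · exact h'
          · exact absurd (Fin.ext (by omega)) hxy
        exact key y.1 (x.1 - y.1) (by omega) (by have := x.2; omega)
          (by rw [← hpxy]; congr 1; omega)

lemma wleq (hk : 0 < k) (hρ : mpRho A = (ρr : Rmax)) (hn : 0 < n) (hF : Fw A n p) :
    ((rwt A n p - n * ρr : ℝ) : Rmax) ≤ mpPlus (tildeM A) (p 0) (p n) := by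
  obtain ⟨n', q, h1, h2, h3, h4, h5, h6⟩ := lenred1 hk hρ n p hn hF
  calc ((rwt A n p - n * ρr : ℝ) : Rmax) ≤ ((rwt A n' q - n' * ρr : ℝ) : Rmax) :=
        WithBot.coe_le_coe.mpr h6
    _ ≤ mpPlus (tildeM A) (q 0) (q n') := P_le hρ h1 h2 h5
    _ = mpPlus (tildeM A) (p 0) (p n) := by rw [h3, h4]

lemma P_coe (hk : 0 < k) (hρ : mpRho A = (ρr : Rmax)) (hconn : GStronglyConnected A)
    (i j : Fin k) : ∃ r : ℝ, mpPlus (tildeM A) i j = (r : Rmax) := by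
  obtain ⟨n, p, hn, hp0, hpn, hF⟩ := hconn i j
  have := wleq hk hρ hn hF
  rw [hp0, hpn] at this
  have hne : mpPlus (tildeM A) i j ≠ ⊥ := fun hbot => by
    rw [hbot, le_bot_iff] at this
    exact WithBot.coe_ne_bot this
  exact (WithBot.ne_bot_iff_exists.mp hne).imp fun r hr => hr.symm

lemma P_attained (hk : 0 < k) (hρ : mpRho A = (ρr : Rmax)) {i j : Fin k} {r : ℝ}
    (hP : mpPlus (tildeM A) i j = (r : Rmax)) :
    ∃ n p, 0 < n ∧ n ≤ k ∧ p 0 = i ∧ p n = j ∧ Fw A n p ∧ rwt A n p - n * ρr = r := by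
  have hne : (Finset.Icc 1 k).Nonempty := ⟨1, Finset.mem_Icc.mpr ⟨le_rfl, hk⟩⟩
  obtain ⟨n₀, hn₀, hsup⟩ := Finset.exists_mem_eq_sup (Finset.Icc 1 k) hne
    (fun m => mpPow (tildeM A) m i j)
  rw [Finset.mem_Icc] at hn₀
  have hpow : mpPow (tildeM A) n₀ i j = (r : Rmax) := by rw [← hsup]; exact hP
  rcases pow_attained hk (tildeM A) n₀ i j with h | ⟨p, hp0, hpn, hpw⟩
  · rw [h] at hpow; exact absurd hpow.symm WithBot.coe_ne_bot
  · rw [hpow] at hpw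
    have hFt : Fw (tildeM A) n₀ p := Fw_of_pathWeight_ne_bot (by rw [hpw]; exact WithBot.coe_ne_bot)
    have hF : Fw A n₀ p := Fw_of_tilde hρ hFt
    refine ⟨n₀, p, hn₀.1, hn₀.2, hp0, hpn, hF, ?_⟩
    rw [pathWeight_eq_rwt hFt, rwt_tilde hρ hF] at hpw
    exact WithBot.coe_inj.mp hpw

end Plus

section Elem

variable {A : MPMat k} {ρr : ℝ} {n : ℕ} {p : ℕ → Fin k}

open Classical in
/-- Elementarization: if the start node does not recur in the interior, a walk can be
reduced to one with no repeated nodes (except possibly endpoints), preserving the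
endpoints, the first arc, and not decreasing the normalized weight. -/
lemma elemrm (hρ : mpRho A = (ρr : Rmax)) : ∀ n, ∀ p : ℕ → Fin k, 0 < n → Fw A n p →
    (∀ l, 0 < l → l < n → p l ≠ p 0) →
    ∃ n' q, 0 < n' ∧ n' ≤ n ∧ q 0 = p 0 ∧ q 1 = p 1 ∧ q n' = p n ∧ Fw A n' q ∧
      (∀ l, 0 < l → l < n' → q l ≠ q 0) ∧
      (∀ l m, l < m → m ≤ n' → ¬(l = 0 ∧ m = n') → q l ≠ q m) ∧
      rwt A n p - n * ρr ≤ rwt A n' q - n' * ρr := by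
  intro n
  induction n using Nat.strong_induction_on with
  | _ n ih =>
    intro p hn hF hprot
    by_cases hrep : ∃ a b, a < b ∧ b ≤ n ∧ ¬(a = 0 ∧ b = n) ∧ p a = p b
    · obtain ⟨a, b, hab, hbn, hne, hp'⟩ := hrep
      have ha : 0 < a := by
        rcases Nat.eq_zero_or_pos a with h0 | h0
        · subst h0
          have hbn' : b < n := by
            rcases lt_or_eq_of_le hbn with h' | h'
            · exact h'
            · exact absurd ⟨rfl, h'⟩ hne
          exact absurd (hp'.symm) (hprot b hab hbn')
        · exact h0
      set d := b - a with hd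
      have hp : p a = p (a + d) := by rw [hp']; congr 1; omega
      have hdn : a + d ≤ n := by omega
      have hd0 : 0 < d := by omega
      have hnd : 0 < n - d := by omega
      have hFs := spliceW_Fw A hp hdn hF
      have hprots : ∀ l, 0 < l → l < n - d → spliceW p a d l ≠ spliceW p a d 0 := by
        intro l hl hln heq
        obtain ⟨m, hm1, hm2, e1, e2⟩ := spliceW_arc (p := p) (a := a) (d := d) hp (l := l)
        rw [spliceW_le hp (Nat.zero_le a), e1] at heq
        exact hprot m (by omega) (by omega) heq
      obtain ⟨n', q, h1, h2, h3, h4, h5, h6, h7, h8, h9⟩ :=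
        ih (n - d) (by omega) (spliceW p a d) hnd hFs hprots
      have hw : rwt A n p - n * ρr ≤ rwt A (n - d) (spliceW p a d) - (↑(n - d)) * ρr := by
        have hloop := cw_le hρ d (fun l => p (l + a)) hd0 (loop_Fw A hdn hF) (loop_closed hp)
        rw [spliceW_rwt A hp hdn]
        have hcast : ((n - d : ℕ) : ℝ) = (n : ℝ) - (d : ℝ) := by
          have : d ≤ n := by omega
          push_cast [this]; ring
        rw [hcast]
        linarith
      refine ⟨n', q, h1, by omega, by rw [h3, spliceW_le hp (Nat.zero_le a)],
        by rw [h4, spliceW_le hp (by omega : 1 ≤ a)],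
        by rw [h5, spliceW_end hp hdn], h6, h7, h8, le_trans hw h9⟩
    · push_neg at hrep
      refine ⟨n, p, hn, le_rfl, rfl, rfl, rfl, hF, ?_, ?_, le_rfl⟩
      · intro l hl hln
        exact hprot l hl hln
      · intro l m hlm hmn hne heq
        exact hrep l m hlm hmn (fun h0 hm => hne ⟨h0, hm⟩) heq

/-- First-return truncation plus elementarization of a critical closed walk. -/
lemma circat (hk : 0 < k) (hρ : mpRho A = (ρr : Rmax)) (hn : 0 < n) (hF : Fw A n p)
    (hclosed : p n = p 0) (hw : rwt A n p = n * ρr) :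
    ∃ n' q, IsElemCircuit n' q ∧ q 0 = p 0 ∧ q 1 = p 1 ∧ Fw A n' q ∧
      rwt A n' q = n' * ρr := by
  classical
  have hex : ∃ t, 0 < t ∧ t ≤ n ∧ p t = p 0 := ⟨n, hn, le_rfl, hclosed⟩
  set t := Nat.find hex with ht
  obtain ⟨ht0, htn, hpt⟩ := Nat.find_spec hex
  have hmin : ∀ s, 0 < s → s < t → p s ≠ p 0 := by
    intro s hs0 hst heq
    exact Nat.find_min hex hst ⟨hs0, by omega, heq⟩
  -- prefix weight is exactly t * ρr
  have hpre : rwt A t p = t * ρr := by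
    have hle := cw_le hρ t p ht0 (Fw_prefix htn hF) hpt
    rcases lt_or_eq_of_le htn with hlt | heq
    · have hsufF : Fw A (n - t) (fun l => p (l + t)) := Fw_shift htn hF
      have hsufC : (fun l => p (l + t)) (n - t) = (fun l => p (l + t)) 0 := by
        simp only [Nat.zero_add]
        have : n - t + t = n := by omega
        rw [this, hclosed, hpt]
      have hsuf := cw_le hρ (n - t) (fun l => p (l + t)) (by omega) hsufF hsufC
      have hsplit := rwt_split A t p htn
      have hcast : ((n - t : ℕ) : ℝ) = (n : ℝ) - (t : ℝ) := Nat.cast_sub htn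
      rw [hcast] at hsuf
      have : rwt A n p = rwt A t p + rwt A (n - t) (fun l => p (l + t)) := hsplit
      linarith [hw, hsuf, hle, this]
    · rw [← heq] at hw; exact hw
  obtain ⟨n', q, h1, h2, h3, h4, h5, h6, h7, h8, h9⟩ :=
    elemrm hρ t p ht0 (Fw_prefix htn hF) hmin
  have hq_closed : q n' = q 0 := by rw [h5, hpt, h3]
  have hqw_ge : n' * ρr ≤ rwt A n' q := by
    have : rwt A t p - t * ρr ≤ rwt A n' q - n' * ρr := h9
    rw [hpre] at this
    linarith
  have hqw_le := cw_le hρ n' q h1 h6 hq_closed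
  refine ⟨n', q, ⟨h1, hq_closed, ?_⟩, h3, h4, h6, le_antisymm hqw_le hqw_ge⟩
  intro l m hl hm heq
  rcases lt_trichotomy l m with h' | h' | h'
  · exact absurd heq (h8 l m h' (by omega) (by omega))
  · exact h'
  · exact absurd heq.symm (h8 m l h' (by omega) (by omega))

/-- Rotation-sum lemma. -/
lemma sum_rotate (f : ℕ → ℝ) (l : ℕ) (hl : l < n) :
    ∑ t ∈ Finset.range n, f ((l + t) % n) = ∑ t ∈ Finset.range n, f t := by
  have hn : 0 < n := by omega
  have hsplit : ∑ t ∈ Finset.range n, f ((l + t) % n)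
      = ∑ t ∈ Finset.range (n - l), f ((l + t) % n)
        + ∑ t ∈ Finset.Ico (n - l) n, f ((l + t) % n) := by
    rw [Finset.sum_range_add_sum_Ico _ (by omega : n - l ≤ n)]
  have h1 : ∑ t ∈ Finset.range (n - l), f ((l + t) % n) = ∑ t ∈ Finset.Ico l n, f t := by
    rw [Finset.sum_Ico_eq_sum_range]
    have : n - l = n - l := rfl
    refine Finset.sum_congr rfl fun t htm => ?_
    rw [Finset.mem_range] at htm
    rw [Nat.mod_eq_of_lt (by omega)]
  have h2 : ∑ t ∈ Finset.Ico (n - l) n, f ((l + t) % n) = ∑ t ∈ Finset.range l, f t := by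
    rw [Finset.sum_Ico_eq_sum_range]
    have hnn : n - (n - l) = l := by omega
    rw [hnn]
    refine Finset.sum_congr rfl fun t htm => ?_
    rw [Finset.mem_range] at htm
    have : l + (n - l + t) = n + t := by omega
    rw [this, Nat.add_mod_left, Nat.mod_eq_of_lt (by omega)]
  rw [hsplit, h1, h2, add_comm, Finset.sum_range_add_sum_Ico _ (by omega : l ≤ n)]

/-- Rotating a closed walk to start at a given position. -/
lemma rotate_walk (hn : 0 < n) (hclosed : p n = p 0) {l : ℕ} (hl : l < n) :
    ∃ q : ℕ → Fin k, q 0 = p l ∧ q n = p l ∧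
      (∀ t < n, ∃ s < n, q t = p s ∧ q (t+1) = p (s+1)) ∧
      (∀ B : MPMat k, rwt B n q = rwt B n p) := by
  set q : ℕ → Fin k := fun t => p ((l + t) % n) with hqdef
  have hstep : ∀ t, q (t+1) = p ((l + t) % n + 1) := by
    intro t
    have hsucc : ((l + t) % n + 1) % n = ((l + t) + 1) % n :=
      Nat.ModEq.add_right 1 (Nat.mod_modEq (l + t) n)
    show p ((l + (t+1)) % n) = p ((l + t) % n + 1)
    have he : l + (t + 1) = (l + t) + 1 := by ring
    rcases Nat.lt_or_ge ((l + t) % n + 1) n with h' | h'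
    · rw [he, ← hsucc, Nat.mod_eq_of_lt h']
    · have hmlt : (l + t) % n < n := Nat.mod_lt _ hn
      have he2 : (l + t) % n + 1 = n := by omega
      rw [he, ← hsucc, he2, Nat.mod_self, hclosed]
  refine ⟨q, ?_, ?_, ?_, ?_⟩
  · show p ((l + 0) % n) = p l
    rw [Nat.add_zero, Nat.mod_eq_of_lt hl]
  · show p ((l + n) % n) = p l
    rw [Nat.add_mod_right, Nat.mod_eq_of_lt hl]
  · intro t htn
    exact ⟨(l + t) % n, Nat.mod_lt _ hn, rfl, hstep t⟩
  · intro B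
    unfold rwt
    have heach : ∀ t ∈ Finset.range n, WithBot.unbotD 0 (B (q t) (q (t+1)))
        = WithBot.unbotD 0 (B (p ((l + t) % n)) (p ((l + t) % n + 1))) := by
      intro t _
      rw [hstep t]
    calc ∑ t ∈ Finset.range n, WithBot.unbotD 0 (B (q t) (q (t+1)))
        = ∑ t ∈ Finset.range n,
            WithBot.unbotD 0 (B (p ((l + t) % n)) (p ((l + t) % n + 1))) :=
          Finset.sum_congr rfl heach
      _ = ∑ t ∈ Finset.range n, WithBot.unbotD 0 (B (p t) (p (t+1))) :=
          sum_rotate (fun s => WithBot.unbotD 0 (B (p s) (p (s+1)))) l hl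

end Elem

section Crit

variable {A : MPMat k} {ρr : ℝ} {n : ℕ} {p : ℕ → Fin k}

lemma crit_node_exists (hk : 0 < k) (hρ : mpRho A = (ρr : Rmax)) :
    ∃ i, IsCritNode A i := by
  obtain ⟨n, p, hn, hnk, hclosed, hF, hw⟩ := rho_attained hk hρ
  refine ⟨p 0, p 1, n, p, hn, hclosed, ?_, ?_, 0, hn, rfl, rfl⟩
  · rw [pathWeight_eq_rwt hF]; exact WithBot.coe_ne_bot
  · rw [circAw_eq hF, hρ, hw, WithBot.coe_inj]
    have : (0:ℝ) < n := by exact_mod_cast hn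
    field_simp

lemma kappa_spec (hk : 0 < k) (hρ : mpRho A = (ρr : Rmax)) :
    ∃ hlt : kappaN A < k, (∀ d : Fin k, kappa A d = ⟨kappaN A, hlt⟩) ∧
      IsCritNode A ⟨kappaN A, hlt⟩ := by
  obtain ⟨i, hi⟩ := crit_node_exists hk hρ
  have hne : {m : ℕ | ∃ h : m < k, IsCritNode A ⟨m, h⟩}.Nonempty :=
    ⟨i.1, i.2, by rw [Fin.eta]; exact hi⟩
  obtain ⟨hlt, hcrit⟩ := Nat.sInf_mem hne
  exact ⟨hlt, fun d => dif_pos hlt, hcrit⟩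

/-- Every node of an arc-critical circuit lies on an elementary critical circuit
starting at it. -/
lemma crit_circuit (hk : 0 < k) (hρ : mpRho A = (ρr : Rmax)) {x : Fin k}
    (hx : IsCritNode A x) :
    ∃ nc pc, IsElemCircuit nc pc ∧ pc 0 = x ∧ Fw A nc pc ∧ rwt A nc pc = nc * ρr := by
  obtain ⟨j, n, p, hn, hclosed, hpw, hcirc, l, hl, hpl, _⟩ := hx
  have hF : Fw A n p := Fw_of_pathWeight_ne_bot hpw
  have hw : rwt A n p = n * ρr := by
    rw [circAw_eq hF, hρ, WithBot.coe_inj] at hcirc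
    have hn' : (0:ℝ) < n := by exact_mod_cast hn
    field_simp at hcirc
    linarith
  obtain ⟨q, hq0, hqn, harc, hqw⟩ := rotate_walk hn hclosed hl
  have hFq : Fw A n q := by
    intro t ht
    obtain ⟨s, hs, e1, e2⟩ := harc t ht
    rw [e1, e2]
    exact hF s hs
  have hqclosed : q n = q 0 := by rw [hq0, hqn]
  obtain ⟨n', pc, helem, hpc0, _, hFc, hwc⟩ :=
    circat hk hρ hn hFq hqclosed (by rw [hqw A]; exact hw)
  exact ⟨n', pc, helem, by rw [hpc0, hq0, hpl], hFc, hwc⟩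

end Crit

section Forms

variable {A : MPMat k} {ρr : ℝ} {n : ℕ} {p : ℕ → Fin k}

lemma sum_pathCoeff_mul (n : ℕ) (p : ℕ → Fin k) (x : Fin k → Fin k → ℝ) :
    ∑ i, ∑ j, pathCoeff n p i j * x i j = ∑ l ∈ Finset.range n, x (p l) (p (l+1)) := by
  classical
  have h1 : ∀ i j, pathCoeff n p i j * x i j
      = ∑ l ∈ Finset.range n, if p l = i ∧ p (l+1) = j then x i j else 0 := by
    intro i j
    unfold pathCoeff
    rw [Finset.card_filter]
    push_cast
    rw [Finset.sum_mul]
    refine Finset.sum_congr rfl fun l _ => ?_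
    by_cases h : p l = i ∧ p (l+1) = j <;> simp [h]
  simp only [h1]
  have h2 : ∀ i : Fin k, ∑ j, ∑ l ∈ Finset.range n, (if p l = i ∧ p (l+1) = j then x i j else 0)
      = ∑ l ∈ Finset.range n, ∑ j, (if p l = i ∧ p (l+1) = j then x i j else 0) :=
    fun i => Finset.sum_comm
  simp only [h2]
  rw [Finset.sum_comm]
  refine Finset.sum_congr rfl fun l _ => ?_
  simp [ite_and, Finset.sum_ite_eq]

lemma pathCoeff_nonzero {i j : Fin k} (h : pathCoeff n p i j ≠ 0) :
    ∃ l < n, p l = i ∧ p (l+1) = j := by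
  classical
  unfold pathCoeff at h
  have : ((Finset.range n).filter fun l => p l = i ∧ p (l + 1) = j).Nonempty := by
    rw [Finset.nonempty_iff_ne_empty]
    intro he
    rw [he] at h
    simp at h
  obtain ⟨l, hl⟩ := this
  rw [Finset.mem_filter, Finset.mem_range] at hl
  exact ⟨l, hl.1, hl.2⟩

lemma pathCoeff_arc_ne_bot (hF : Fw A n p) {i j : Fin k} (h : pathCoeff n p i j ≠ 0) :
    A i j ≠ ⊥ := by
  obtain ⟨l, hl, e1, e2⟩ := pathCoeff_nonzero h
  rw [← e1, ← e2]
  exact hF l hl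

open Classical in
lemma evalForm_eq (α : Fin k → Fin k → ℝ) (hα : ∀ i j, α i j ≠ 0 → A i j ≠ ⊥) :
    evalForm α A = ((∑ i, ∑ j, α i j * (A i j).unbotD 0 : ℝ) : Rmax) := by
  unfold evalForm
  rw [if_pos hα]
  congr 1
  refine Finset.sum_congr rfl fun i _ => Finset.sum_congr rfl fun j _ => ?_
  by_cases h : α i j = 0 <;> simp [h]

lemma sum_pathCoeff_mul_rwt (hF : Fw A n p) :
    ∑ i, ∑ j, pathCoeff n p i j * (A i j).unbotD 0 = rwt A n p :=
  sum_pathCoeff_mul n p _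

lemma sum_circCoeff_mul (hn : 0 < n) (x : Fin k → Fin k → ℝ) :
    ∑ i, ∑ j, circCoeff n p i j * x i j = (∑ l ∈ Finset.range n, x (p l) (p (l+1))) / n := by
  unfold circCoeff
  rw [← sum_pathCoeff_mul n p x, Finset.sum_div]
  refine Finset.sum_congr rfl fun i _ => ?_
  rw [Finset.sum_div]
  refine Finset.sum_congr rfl fun j _ => ?_
  rw [div_mul_eq_mul_div]

end Forms

section Contra

variable {A : MPMat k} {ρr : ℝ}

lemma E1_contra (hρ : mpRho A = (ρr : Rmax)) (h1 : NoE1Vanishes A)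
    {n₁ n₂ : ℕ} {p₁ p₂ : ℕ → Fin k}
    (he₁ : IsElemCircuit n₁ p₁) (he₂ : IsElemCircuit n₂ p₂)
    (hF₁ : Fw A n₁ p₁) (hF₂ : Fw A n₂ p₂)
    (hw₁ : rwt A n₁ p₁ = n₁ * ρr) (hw₂ : rwt A n₂ p₂ = n₂ * ρr)
    (hsets : circArcSet n₁ p₁ ≠ circArcSet n₂ p₂) : False := by
  obtain ⟨hn₁, hc₁, hinj₁⟩ := he₁
  obtain ⟨hn₂, hc₂, hinj₂⟩ := he₂
  refine h1 n₁ n₂ p₁ p₂ ⟨hn₁, hc₁, hinj₁⟩ ⟨hn₂, hc₂, hinj₂⟩ hsets ?_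
  have hα : ∀ i j, (circCoeff n₁ p₁ i j - circCoeff n₂ p₂ i j) ≠ 0 → A i j ≠ ⊥ := by
    intro i j hij
    by_cases hz₁ : pathCoeff n₁ p₁ i j = 0
    · by_cases hz₂ : pathCoeff n₂ p₂ i j = 0
      · exfalso; apply hij; unfold circCoeff; rw [hz₁, hz₂]; simp
      · exact pathCoeff_arc_ne_bot hF₂ hz₂
    · exact pathCoeff_arc_ne_bot hF₁ hz₁
  rw [evalForm_eq _ hα]
  have hval : ∑ i, ∑ j, (circCoeff n₁ p₁ i j - circCoeff n₂ p₂ i j) * (A i j).unbotD 0 = 0 := by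
    simp only [sub_mul, Finset.sum_sub_distrib]
    rw [sum_circCoeff_mul hn₁, sum_circCoeff_mul hn₂]
    show rwt A n₁ p₁ / n₁ - rwt A n₂ p₂ / n₂ = 0
    rw [hw₁, hw₂]
    have h1' : (0:ℝ) < n₁ := by exact_mod_cast hn₁
    have h2' : (0:ℝ) < n₂ := by exact_mod_cast hn₂
    field_simp
    ring
  rw [hval]
  rfl

lemma E2_contra (hρ : mpRho A = (ρr : Rmax)) (h2 : NoE2Vanishes A)
    {i κ : Fin k} {n₁ n₂ nc : ℕ} {p₁ p₂ pc : ℕ → Fin k}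
    (hiκ : i ≠ κ) (he₁ : IsElemPath n₁ p₁) (he₂ : IsElemPath n₂ p₂)
    (h10 : p₁ 0 = i) (h20 : p₂ 0 = i) (h1n : p₁ n₁ = κ) (h2n : p₂ n₂ = κ)
    (hec : IsElemCircuit nc pc) (hc0 : pc 0 = κ)
    (hF₁ : Fw A n₁ p₁) (hF₂ : Fw A n₂ p₂) (hFc : Fw A nc pc)
    (hwc : rwt A nc pc = nc * ρr)
    (hw : rwt A n₁ p₁ - n₁ * ρr = rwt A n₂ p₂ - n₂ * ρr)
    (hn₁ : 0 < n₁) (hn₂ : 0 < n₂) (hne : p₁ 1 ≠ p₂ 1) : False := by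
  have hnc : 0 < nc := hec.1
  refine h2 i κ n₁ n₂ nc p₁ p₂ pc hiκ he₁ he₂ h10 h20 h1n h2n hec ⟨0, hnc, hc0⟩
    (fun ⟨heq, hall⟩ => hne (hall 1 hn₁)) ?_
  have hα : ∀ a b, (pathCoeff n₁ p₁ a b - (n₁ : ℝ) * circCoeff nc pc a b
      - pathCoeff n₂ p₂ a b + (n₂ : ℝ) * circCoeff nc pc a b) ≠ 0 → A a b ≠ ⊥ := by
    intro a b hab
    by_cases hz₁ : pathCoeff n₁ p₁ a b = 0
    · by_cases hz₂ : pathCoeff n₂ p₂ a b = 0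
      · by_cases hzc : pathCoeff nc pc a b = 0
        · exfalso; apply hab
          unfold circCoeff
          rw [hz₁, hz₂, hzc]
          simp
        · exact pathCoeff_arc_ne_bot hFc hzc
      · exact pathCoeff_arc_ne_bot hF₂ hz₂
    · exact pathCoeff_arc_ne_bot hF₁ hz₁
  rw [evalForm_eq _ hα]
  have hval : ∑ a, ∑ b, (pathCoeff n₁ p₁ a b - (n₁ : ℝ) * circCoeff nc pc a b
      - pathCoeff n₂ p₂ a b + (n₂ : ℝ) * circCoeff nc pc a b) * (A a b).unbotD 0 = 0 := by
    simp only [sub_mul, add_mul, Finset.sum_sub_distrib, Finset.sum_add_distrib, mul_assoc,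
      ← Finset.mul_sum]
    rw [sum_pathCoeff_mul_rwt hF₁, sum_pathCoeff_mul_rwt hF₂, sum_circCoeff_mul hnc]
    show rwt A n₁ p₁ - ↑n₁ * (rwt A nc pc / nc) - rwt A n₂ p₂ + ↑n₂ * (rwt A nc pc / nc) = 0
    rw [hwc]
    have hnc' : (0:ℝ) < nc := by exact_mod_cast hnc
    field_simp
    linarith [hw]
  rw [hval]
  rfl

end Contra

section Walks2

variable {A : MPMat k} {ρr : ℝ}

lemma elem_start_sets_ne {n₁ n₂ : ℕ} {p₁ p₂ : ℕ → Fin k}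
    (he₁ : IsElemCircuit n₁ p₁) (hstart : p₁ 0 = p₂ 0) (hn₂ : 0 < n₂)
    (hne : p₁ 1 ≠ p₂ 1) : circArcSet n₁ p₁ ≠ circArcSet n₂ p₂ := by
  intro hset
  have hmem : (p₂ 0, p₂ 1) ∈ circArcSet n₂ p₂ := ⟨0, hn₂, rfl, rfl⟩
  rw [← hset] at hmem
  obtain ⟨l, hl, e1, e2⟩ := hmem
  have : l = 0 := he₁.2.2 l 0 hl he₁.1 (by rw [e1, hstart])
  subst this
  exact hne (by rw [e2])

lemma concat_walk {m₁ m₂ : ℕ} {u v : ℕ → Fin k} (hm₁ : 0 < m₁)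
    (huv : u m₁ = v 0) (hFu : Fw A m₁ u) (hFv : Fw A m₂ v) :
    ∃ r : ℕ → Fin k, r 0 = u 0 ∧ r (m₁ + m₂) = v m₂ ∧ r 1 = u 1 ∧ Fw A (m₁ + m₂) r ∧
      rwt A (m₁ + m₂) r = rwt A m₁ u + rwt A m₂ v := by
  set r : ℕ → Fin k := fun t => if t < m₁ then u t else v (t - m₁) with hr
  have key1 : ∀ l ≤ m₁, r l = u l := by
    intro l hl
    show (if l < m₁ then u l else v (l - m₁)) = u l
    rcases lt_or_eq_of_le hl with h | h
    · rw [if_pos h]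
    · rw [if_neg (by omega), h, Nat.sub_self, ← huv]
  have key2 : ∀ l, r (l + m₁) = v l := by
    intro l
    show (if l + m₁ < m₁ then _ else v (l + m₁ - m₁)) = v l
    rw [if_neg (by omega)]
    congr 1
    omega
  have hFr : Fw A (m₁ + m₂) r := by
    intro l hl
    rcases Nat.lt_or_ge l m₁ with h | h
    · rw [key1 l (by omega), key1 (l+1) (by omega)]
      exact hFu l h
    · have e1 : r l = v (l - m₁) := by
        show (if l < m₁ then u l else v (l - m₁)) = v (l - m₁)
        rw [if_neg (by omega)]
      have e2 : r (l+1) = v (l - m₁ + 1) := by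
        show (if l + 1 < m₁ then u (l+1) else v (l + 1 - m₁)) = v (l - m₁ + 1)
        rw [if_neg (by omega)]
        congr 1
        omega
      rw [e1, e2]
      exact hFv (l - m₁) (by omega)
  refine ⟨r, key1 0 (by omega), ?_, key1 1 hm₁, hFr, ?_⟩
  · have : m₁ + m₂ = m₂ + m₁ := by omega
    rw [this, key2]
  · rw [rwt_split A m₁ r (by omega)]
    have e1 : rwt A m₁ r = rwt A m₁ u := rwt_congr key1
    have e2 : rwt A (m₁ + m₂ - m₁) (fun l => r (l + m₁)) = rwt A m₂ v := by
      have h1 : m₁ + m₂ - m₁ = m₂ := by omega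
      rw [h1]
      exact rwt_congr (fun l _ => key2 l)
    rw [e1, e2]

lemma prepend_walk {i j : Fin k} {a : ℝ} (hij : A i j = (a : Rmax)) {m : ℕ} {v : ℕ → Fin k}
    (hv0 : v 0 = j) (hFv : Fw A m v) :
    ∃ p : ℕ → Fin k, p 0 = i ∧ p 1 = j ∧ p (m + 1) = v m ∧ Fw A (m + 1) p ∧
      rwt A (m + 1) p = a + rwt A m v := by
  set p : ℕ → Fin k := fun t => if t = 0 then i else v (t - 1) with hp
  have key0 : p 0 = i := rfl
  have key : ∀ l, p (l + 1) = v l := by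
    intro l
    show (if l + 1 = 0 then i else v (l + 1 - 1)) = v l
    rw [if_neg (by omega), Nat.add_sub_cancel]
  have hFp : Fw A (m + 1) p := by
    intro l hl
    rcases Nat.eq_zero_or_pos l with h | h
    · subst h
      rw [key0, key 0, hv0, hij]
      exact WithBot.coe_ne_bot
    · have e1 : p l = v (l - 1) := by
        show (if l = 0 then i else v (l - 1)) = v (l - 1)
        rw [if_neg (by omega)]
      rw [e1, key l]
      have hl1 : l - 1 + 1 = l := by omega
      have hv := hFv (l - 1) (by omega)
      rw [hl1] at hv
      exact hv
  refine ⟨p, key0, by rw [key 0, hv0], key m, hFp, ?_⟩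
  rw [rwt_split A 1 p (by omega)]
  have e1 : rwt A 1 p = a := by
    unfold rwt
    rw [Finset.sum_range_one, key0, key 0, hv0, hij]
    simp
  have e2 : rwt A (m + 1 - 1) (fun l => p (l + 1)) = rwt A m v := by
    have h1 : m + 1 - 1 = m := by omega
    rw [h1]
    exact rwt_congr (fun l _ => key l)
  rw [e1, e2]

/-- Dichotomy: an optimal walk from `i` to `κ` yields either an optimal elementary path
or an elementary critical circuit at `i`, preserving the first arc. -/
lemma dichot (hk : 0 < k) (hρ : mpRho A = (ρr : Rmax))
    {i κ : Fin k} {r : ℝ} (hPiκ : mpPlus (tildeM A) i κ = (r : Rmax))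
    (hr0 : i = κ → r = 0) {n : ℕ} {p : ℕ → Fin k}
    (hn : 0 < n) (hF : Fw A n p) (hp0 : p 0 = i) (hpn : p n = κ)
    (hw : rwt A n p - n * ρr = r) :
    (∃ n' q, IsElemPath n' q ∧ 0 < n' ∧ q 0 = i ∧ q n' = κ ∧ Fw A n' q ∧ q 1 = p 1 ∧
       rwt A n' q - n' * ρr = r) ∨
    (∃ n' q, IsElemCircuit n' q ∧ q 0 = i ∧ Fw A n' q ∧ q 1 = p 1 ∧
       rwt A n' q = n' * ρr) := by
  classical
  by_cases hrec : ∃ t, 0 < t ∧ t ≤ n ∧ p t = p 0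
  · right
    obtain ⟨t, ht0, htn, hpt⟩ := hrec
    -- take the first return
    have hex : ∃ t, 0 < t ∧ t ≤ n ∧ p t = p 0 := ⟨t, ht0, htn, hpt⟩
    clear hpt htn ht0 t
    obtain ⟨ht0, htn, hpt⟩ := Nat.find_spec hex
    set t := Nat.find hex with htdef
    have hpre0 : rwt A t p = t * ρr := by
      have hle := cw_le hρ t p ht0 (Fw_prefix htn hF) hpt
      rcases lt_or_eq_of_le htn with hlt | heq
      · -- suffix is a walk from i to κ
        have hsufF : Fw A (n - t) (fun l => p (l + t)) := Fw_shift htn hF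
        have hsuf0 : p (0 + t) = i := by
          rw [Nat.zero_add, hpt, hp0]
        have hsufn : p (n - t + t) = κ := by
          have : n - t + t = n := by omega
          rw [this, hpn]
        have hsuf := wleq hk hρ (by omega : 0 < n - t) hsufF
        simp only [hsuf0, hsufn, hPiκ, WithBot.coe_le_coe] at hsuf
        have hsplit := rwt_split A t p htn
        have hcast : ((n - t : ℕ) : ℝ) = (n : ℝ) - (t : ℝ) := Nat.cast_sub htn
        rw [hcast] at hsuf
        linarith [hsplit, hw, hle, hsuf]
      · have hiκ : i = κ := by rw [← hp0, ← hpt, heq, hpn]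
        have := hr0 hiκ
        rw [← heq] at hw
        linarith [hw, this]
    have hmin : ∀ s, 0 < s → s < t → p s ≠ p 0 := by
      intro s hs0 hst heq
      exact Nat.find_min hex hst ⟨hs0, by omega, heq⟩
    obtain ⟨n', q, helem, hq0, hq1, hFq, hqw⟩ :=
      circat hk hρ ht0 (Fw_prefix htn hF) hpt hpre0
    exact ⟨n', q, helem, by rw [hq0, hp0], hFq, hq1, hqw⟩
  · left
    push_neg at hrec
    have hprot : ∀ l, 0 < l → l < n → p l ≠ p 0 := fun l h1 h2 => hrec l h1 (by omega)
    have hiκ : i ≠ κ := by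
      intro h
      exact hrec n hn le_rfl (by rw [hpn, hp0, h])
    obtain ⟨n', q, h1, h2, h3, h4, h5, h6, h7, h8, h9⟩ := elemrm hρ n p hn hF hprot
    have hq0 : q 0 = i := by rw [h3, hp0]
    have hqn : q n' = κ := by rw [h5, hpn]
    have helem : IsElemPath n' q := by
      intro l m hl hm heq
      rcases lt_trichotomy l m with h' | h' | h'
      · by_cases hlm : l = 0 ∧ m = n'
        · exfalso
          rw [hlm.1, hlm.2, hq0, hqn] at heq
          exact hiκ heq
        · exact absurd heq (h8 l m h' hm hlm)
      · exact h'
      · by_cases hlm : m = 0 ∧ l = n'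
        · exfalso
          rw [hlm.1, hlm.2, hq0, hqn] at heq
          exact hiκ heq.symm
        · exact absurd heq.symm (h8 m l h' hl hlm)
    have hwle' := wleq hk hρ h1 h6
    rw [hq0, hqn, hPiκ, WithBot.coe_le_coe] at hwle'
    exact ⟨n', q, helem, h1, hq0, hqn, h6, h4, le_antisymm hwle' (by linarith [h9, hw])⟩

end Walks2

end Aux
end MaxPlus

/-- if no linear form of `E₁ ∪ E₂` vanishes at `A` (with `G(A)` strongly
connected), then `Ā` is strictly reduced. -/
theorem stmt11 (k : ℕ) (A : MPMat k) (hA : MaxPlus.MemMk A)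
    (hconn : MaxPlus.GStronglyConnected A)
    (h1 : MaxPlus.NoE1Vanishes A) (h2 : MaxPlus.NoE2Vanishes A) :
    MaxPlus.IsStrictlyReduced (MaxPlus.barM A) := by
  classical
  rcases Nat.eq_zero_or_pos k with hk0 | hk
  · subst hk0
    exact ⟨fun i => i.elim0, fun i => i.elim0⟩
  obtain ⟨ρr, hρ⟩ := MaxPlus.rho_coe hk hconn
  obtain ⟨hlt, hkap, hκcrit⟩ := MaxPlus.kappa_spec hk hρ
  set κ : Fin k := ⟨MaxPlus.kappaN A, hlt⟩ with hκdef
  have hPex : ∀ i j : Fin k, ∃ r : ℝ, MaxPlus.mpPlus (MaxPlus.tildeM A) i j = (r : Rmax) :=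
    MaxPlus.P_coe hk hρ hconn
  choose Pr hPr using hPex
  have hwle : ∀ {n : ℕ} {p : ℕ → Fin k}, 0 < n → MaxPlus.Fw A n p →
      MaxPlus.rwt A n p - n * ρr ≤ Pr (p 0) (p n) := by
    intro n p hn hF
    have h := MaxPlus.wleq hk hρ hn hF
    rw [hPr] at h
    exact WithBot.coe_le_coe.mp h
  obtain ⟨nc, pc, hecc, hpc0, hFcc, hwcc⟩ := MaxPlus.crit_circuit hk hρ hκcrit
  have hPKK : Pr κ κ = 0 := by
    have hle : Pr κ κ ≤ 0 := by
      obtain ⟨m, u, hm, hmk, hu0, hum, hFu, hwu⟩ := MaxPlus.P_attained hk hρ (hPr κ κ)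
      have hc := MaxPlus.cw_le hρ m u hm hFu (by rw [hu0, hum])
      linarith
    have hge : (0:ℝ) ≤ Pr κ κ := by
      have h0 := hwle hecc.1 hFcc
      rw [hecc.2.1, hpc0] at h0
      linarith [hwcc, h0]
    linarith
  have hbar_bot : ∀ i j : Fin k, A i j = ⊥ → MaxPlus.barM A i j = ⊥ := by
    intro i j h
    unfold MaxPlus.barM
    rw [MaxPlus.tilde_bot hρ h, WithBot.bot_add, WithBot.bot_add]
  have hbar_coe : ∀ (i j : Fin k) (a : ℝ), A i j = (a : Rmax) →
      MaxPlus.barM A i j = ((a - ρr - Pr i κ + Pr j κ : ℝ) : Rmax) := by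
    intro i j a h
    unfold MaxPlus.barM
    rw [hkap i, MaxPlus.tilde_coe hρ h, hPr i κ, hPr j κ, MaxPlus.negB_coe,
      ← WithBot.coe_add, ← WithBot.coe_add]
    congr 1
  have hle0 : ∀ (i j : Fin k) (a : ℝ), A i j = (a : Rmax) → a - ρr + Pr j κ ≤ Pr i κ := by
    intro i j a h
    obtain ⟨m, v, hm, hmk, hv0, hvm, hFv, hwv⟩ := MaxPlus.P_attained hk hρ (hPr j κ)
    obtain ⟨p, hp0, hp1, hpm, hFp, hwp⟩ := MaxPlus.prepend_walk h hv0 hFv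
    have h1 := hwle (Nat.succ_pos m) hFp
    have hpm' : p (m + 1) = κ := by rw [hpm, hvm]
    rw [hp0, hpm', hwp] at h1
    push_cast at h1
    linarith [hwv, h1]
  have hzero : ∀ i : Fin k, ∃ (j : Fin k) (a : ℝ), A i j = (a : Rmax) ∧
      a - ρr + Pr j κ = Pr i κ := by
    intro i
    obtain ⟨m, u, hm, hmk, hu0, hum, hFu, hwu⟩ := MaxPlus.P_attained hk hρ (hPr i κ)
    obtain ⟨a, ha⟩ := WithBot.ne_bot_iff_exists.mp (hFu 0 hm)
    have haij : A i (u 1) = (a : Rmax) := by rw [← hu0]; exact ha.symm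
    refine ⟨u 1, a, haij, ?_⟩
    have hsplit := MaxPlus.rwt_split A 1 u hm
    have hr1 : MaxPlus.rwt A 1 u = a := by
      unfold MaxPlus.rwt
      rw [Finset.sum_range_one, ← ha]
      simp
    rcases Nat.lt_or_ge 1 m with hm2 | hm1
    · have hFs : MaxPlus.Fw A (m - 1) (fun l => u (l + 1)) := MaxPlus.Fw_shift hm hFu
      have hs := hwle (n := m - 1) (p := fun l => u (l + 1)) (by omega) hFs
      have e0 : u (0 + 1) = u 1 := by rw [Nat.zero_add]
      have em : u ((m - 1) + 1) = κ := by
        have : m - 1 + 1 = m := by omega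
        rw [this, hum]
      simp only [e0, em] at hs
      have hle' := hle0 i (u 1) a haij
      have hcast : ((m - 1 : ℕ) : ℝ) = (m:ℝ) - 1 := by push_cast [(by omega : 1 ≤ m)]; ring
      rw [hcast] at hs
      have hup : Pr i κ ≤ a - ρr + Pr (u 1) κ := by
        push_cast at hwu
        linarith [hwu, hr1, hs, hsplit]
      linarith [hle', hup]
    · have hm1' : m = 1 := by omega
      subst hm1'
      rw [hum, hPKK]
      rw [hr1] at hwu
      push_cast at hwu
      linarith [hwu]
  refine ⟨?_, ?_⟩
  · intro i j
    by_cases hb : A i j = ⊥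
    · rw [hbar_bot i j hb]
      exact bot_le
    · obtain ⟨a, ha⟩ := WithBot.ne_bot_iff_exists.mp hb
      rw [hbar_coe i j a ha.symm]
      have := hle0 i j a ha.symm
      have h0 : ((a - ρr - Pr i κ + Pr j κ : ℝ) : Rmax) ≤ ((0:ℝ) : Rmax) :=
        WithBot.coe_le_coe.mpr (by linarith)
      simpa using h0
  · intro i
    obtain ⟨j₀, a₀, hA0, heq0⟩ := hzero i
    have hzeq : ∀ j : Fin k, MaxPlus.barM A i j = 0 →
        ∃ a : ℝ, A i j = (a : Rmax) ∧ a - ρr + Pr j κ = Pr i κ := by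
      intro j hj
      by_cases hb : A i j = ⊥
      · rw [hbar_bot i j hb] at hj
        rw [← WithBot.coe_zero] at hj
        exact absurd hj (WithBot.bot_ne_coe)
      · obtain ⟨a, ha⟩ := WithBot.ne_bot_iff_exists.mp hb
        refine ⟨a, ha.symm, ?_⟩
        rw [hbar_coe i j a ha.symm, ← WithBot.coe_zero, WithBot.coe_inj] at hj
        linarith [hj]
    have hdi : ∀ (j : Fin k) (a : ℝ), A i j = (a : Rmax) → a - ρr + Pr j κ = Pr i κ →
        (∃ n' q, MaxPlus.IsElemPath n' q ∧ 0 < n' ∧ q 0 = i ∧ q n' = κ ∧ MaxPlus.Fw A n' q ∧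
          q 1 = j ∧ MaxPlus.rwt A n' q - n' * ρr = Pr i κ) ∨
        (∃ n' q, MaxPlus.IsElemCircuit n' q ∧ q 0 = i ∧ MaxPlus.Fw A n' q ∧ q 1 = j ∧
          MaxPlus.rwt A n' q = n' * ρr) := by
      intro j a ha heq
      obtain ⟨m, v, hm, hmk, hv0, hvm, hFv, hwv⟩ := MaxPlus.P_attained hk hρ (hPr j κ)
      obtain ⟨p, hp0, hp1, hpm, hFp, hwp⟩ := MaxPlus.prepend_walk ha hv0 hFv
      have hpm' : p (m + 1) = κ := by rw [hpm, hvm]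
      have hr0 : i = κ → Pr i κ = 0 := fun h => by rw [h]; exact hPKK
      have hw' : MaxPlus.rwt A (m+1) p - ((m+1 : ℕ) : ℝ) * ρr = Pr i κ := by
        rw [hwp]
        push_cast
        linarith [hwv, heq]
      have hD := MaxPlus.dichot hk hρ (hPr i κ) hr0 (Nat.succ_pos m) hFp hp0 hpm' hw'
      rcases hD with ⟨n', q, h1, h2, h3, h4, h5, h6, h7⟩ | ⟨n', q, h1, h2, h3, h4, h5⟩
      · exact Or.inl ⟨n', q, h1, h2, h3, h4, h5, by rw [h6, hp1], h7⟩
      · exact Or.inr ⟨n', q, h1, h2, h3, by rw [h4, hp1], h5⟩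
    -- handlers
    have hiκ_of_path : ∀ {n' : ℕ} {q : ℕ → Fin k}, MaxPlus.IsElemPath n' q → 0 < n' →
        q 0 = i → q n' = κ → i ≠ κ := by
      intro n' q he hn' h0 hn heq
      have := he 0 n' (Nat.zero_le _) le_rfl (by rw [h0, hn, heq])
      omega
    have hpp : ∀ (j₁ j₂ : Fin k), j₁ ≠ j₂ →
        (∃ n' q, MaxPlus.IsElemPath n' q ∧ 0 < n' ∧ q 0 = i ∧ q n' = κ ∧ MaxPlus.Fw A n' q ∧
          q 1 = j₁ ∧ MaxPlus.rwt A n' q - n' * ρr = Pr i κ) →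
        (∃ n' q, MaxPlus.IsElemPath n' q ∧ 0 < n' ∧ q 0 = i ∧ q n' = κ ∧ MaxPlus.Fw A n' q ∧
          q 1 = j₂ ∧ MaxPlus.rwt A n' q - n' * ρr = Pr i κ) → False := by
      rintro j₁ j₂ hne12 ⟨n₁, q₁, he₁, hn₁, h10, h1n, hF₁, h11, hw₁⟩
        ⟨n₂, q₂, he₂, hn₂, h20, h2n, hF₂, h21, hw₂⟩
      have hiκ : i ≠ κ := hiκ_of_path he₁ hn₁ h10 h1n
      exact MaxPlus.E2_contra hρ h2 hiκ he₁ he₂ h10 h20 h1n h2n hecc hpc0 hF₁ hF₂ hFcc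
        hwcc (by rw [hw₁, hw₂]) hn₁ hn₂ (by rw [h11, h21]; exact hne12)
    have hcc : ∀ (j₁ j₂ : Fin k), j₁ ≠ j₂ →
        (∃ n' q, MaxPlus.IsElemCircuit n' q ∧ q 0 = i ∧ MaxPlus.Fw A n' q ∧ q 1 = j₁ ∧
          MaxPlus.rwt A n' q = n' * ρr) →
        (∃ n' q, MaxPlus.IsElemCircuit n' q ∧ q 0 = i ∧ MaxPlus.Fw A n' q ∧ q 1 = j₂ ∧
          MaxPlus.rwt A n' q = n' * ρr) → False := by
      rintro j₁ j₂ hne12 ⟨n₁, q₁, he₁, h10, hF₁, h11, hw₁⟩ ⟨n₂, q₂, he₂, h20, hF₂, h21, hw₂⟩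
      have hsets := MaxPlus.elem_start_sets_ne he₁ (h10.trans h20.symm) he₂.1
        (fun hq => hne12 ((h11.symm.trans hq).trans h21))
      exact MaxPlus.E1_contra hρ h1 he₁ he₂ hF₁ hF₂ hw₁ hw₂ hsets
    have hmix : ∀ (j₁ j₂ : Fin k), j₁ ≠ j₂ →
        (∃ n' q, MaxPlus.IsElemPath n' q ∧ 0 < n' ∧ q 0 = i ∧ q n' = κ ∧ MaxPlus.Fw A n' q ∧
          q 1 = j₁ ∧ MaxPlus.rwt A n' q - n' * ρr = Pr i κ) →
        (∃ n' q, MaxPlus.IsElemCircuit n' q ∧ q 0 = i ∧ MaxPlus.Fw A n' q ∧ q 1 = j₂ ∧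
          MaxPlus.rwt A n' q = n' * ρr) → False := by
      rintro j₁ j₂ hne12 ⟨n₁, q₁, hep, hn₁, h10, h1n, hFq₁, h11, hwq₁⟩
        ⟨n₂, c₂, hec₂, h20, hFc₂, h21, hwc₂⟩
      have hiκ : i ≠ κ := hiκ_of_path hep hn₁ h10 h1n
      by_cases hsets : MaxPlus.circArcSet nc pc = MaxPlus.circArcSet n₂ c₂
      · have hmem : (κ, pc 1) ∈ MaxPlus.circArcSet n₂ c₂ := by
          rw [← hsets]
          exact ⟨0, hecc.1, hpc0, rfl⟩
        obtain ⟨l, hl, hlκ0, _⟩ := hmem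
        have hlκ : c₂ l = κ := hlκ0
        have hl1 : 0 < l := by
          rcases Nat.eq_zero_or_pos l with h0 | h0
          · exact absurd (by rw [← h20, ← h0]; exact hlκ) hiκ
          · exact h0
        have hepre : MaxPlus.IsElemPath l c₂ := fun s t hs ht heq =>
          hec₂.2.2 s t (by omega) (by omega) heq
        have hsplit := MaxPlus.rwt_split A l c₂ (le_of_lt hl)
        have hsufF : MaxPlus.Fw A (n₂ - l) (fun s => c₂ (s + l)) :=
          MaxPlus.Fw_shift (le_of_lt hl) hFc₂
        have hs := hwle (n := n₂ - l) (p := fun s => c₂ (s + l)) (by omega) hsufF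
        have hs0 : c₂ (0 + l) = κ := by rw [Nat.zero_add, hlκ]
        have hsn : c₂ ((n₂ - l) + l) = i := by
          have : n₂ - l + l = n₂ := by omega
          rw [this, hec₂.2.1, h20]
        simp only [hs0, hsn] at hs
        have hps : Pr i κ + Pr κ i ≤ 0 := by
          obtain ⟨m₁, u, hm₁, _, hu0, hu1, hFu, hwu⟩ := MaxPlus.P_attained hk hρ (hPr i κ)
          obtain ⟨m₂, v, hm₂, _, hv0, hv1, hFv, hwv⟩ := MaxPlus.P_attained hk hρ (hPr κ i)
          obtain ⟨w, hw0, hwend, _, hFw, hww⟩ := MaxPlus.concat_walk hm₁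
            (by rw [hu1, hv0]) hFu hFv
          have hcl := MaxPlus.cw_le hρ (m₁ + m₂) w (by omega) hFw
            (by rw [hwend, hw0, hv1, hu0])
          rw [hww] at hcl
          push_cast at hcl
          linarith [hwu, hwv, hcl]
        have hcast : ((n₂ - l : ℕ) : ℝ) = (n₂:ℝ) - l := by push_cast [le_of_lt hl]; ring
        rw [hcast] at hs
        have hw2' : MaxPlus.rwt A l c₂ - l * ρr = Pr i κ := by
          have hup : MaxPlus.rwt A l c₂ - l * ρr ≤ Pr i κ := by
            have h' := hwle (n := l) (p := c₂) hl1 (MaxPlus.Fw_prefix (le_of_lt hl) hFc₂)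
            rw [h20, hlκ] at h'
            exact h'
          have hdown : Pr i κ ≤ MaxPlus.rwt A l c₂ - l * ρr := by
            linarith [hwc₂, hsplit, hs, hps]
          linarith
        exact MaxPlus.E2_contra hρ h2 hiκ hep hepre h10 h20 h1n hlκ hecc hpc0 hFq₁
          (MaxPlus.Fw_prefix (le_of_lt hl) hFc₂) hFcc hwcc (by rw [hwq₁, hw2']) hn₁ hl1
          (by rw [h11, h21]; exact hne12)
      · exact MaxPlus.E1_contra hρ h1 hecc hec₂ hFcc hFc₂ hwcc hwc₂ hsets
    refine ⟨j₀, ?_, ?_⟩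
    · show MaxPlus.barM A i j₀ = 0
      rw [hbar_coe i j₀ a₀ hA0]
      have he : a₀ - ρr - Pr i κ + Pr j₀ κ = 0 := by linarith [heq0]
      rw [he, WithBot.coe_zero]
    · intro j hj
      by_contra hne
      obtain ⟨a₁, ha₁, heq₁⟩ := hzeq j hj
      rcases hdi j a₁ ha₁ heq₁ with D₁ | D₁ <;> rcases hdi j₀ a₀ hA0 heq0 with D₂ | D₂
      · exact hpp j j₀ hne D₁ D₂
      · exact hmix j j₀ hne D₁ D₂
      · exact hmix j₀ j (Ne.symm hne) D₂ D₁
      · exact hcc j j₀ hne D₁ D₂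
end
end
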